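/- arXiv:2010.16412 — 7 statements merged into one kernel-verified Lean document; each statement's English description precedes it below -/
import Mathlib

section
/- (Proposition 1, OOD optimality of the invariant predictor) Suppose that for every environment e ∈ E_all, m(Φ*(X^e)) is a version of the conditional expectation E^e[Y^e | σ(Φ*(X^e))] and the conditional second moment satisfies E^e[(Y^e − m(Φ*(X^e)))² | σ(Φ*(X^e))] = ξ² almost surely, and that there exists an environment q ∈ E_all in which Y^q is conditionally independent of X^q given σ(Φ*(X^q)). Then the predictor m∘Φ* solves the out-of-distribution minimax problem for square loss: sup_{e∈E_all} R^e(m∘Φ*) = ξ² and for every measurable f : 𝒳 → ℝ, sup_{e∈E_all} R^e(f) ≥ ξ². In particular m∘Φ* attains min over measurable f of max over e ∈ E_all of R^e(f). -/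
open MeasureTheory ProbabilityTheory

section Aux

variable {α : Type*} {m m0 : MeasurableSpace α} {μ : Measure α}

private lemma integrable_mul_of_memL2 {f g : α → ℝ} (hf : MemLp f 2 μ) (hg : MemLp g 2 μ) :
    Integrable (fun x => f x * g x) μ := by
  refine Integrable.mono' (((hf.integrable_sq.add hg.integrable_sq).div_const 2))
    (hf.1.mul hg.1) (Filter.Eventually.of_forall fun x => ?_)
  simp only [Pi.add_apply]
  rw [Real.norm_eq_abs, abs_mul]
  have h := two_mul_le_add_sq |f x| |g x|
  rw [sq_abs, sq_abs] at h
  linarith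

private lemma memℒp_two_condexp (hm : m ≤ m0) [IsFiniteMeasure μ] {f : α → ℝ}
    (hf : MemLp f 2 μ) : MemLp (μ[f|m]) 2 μ := by
  haveI : SigmaFinite (μ.trim hm) := by
    haveI := isFiniteMeasure_trim (μ := μ) hm; infer_instance
  have hg2 : MemLp (condExpL2 ℝ ℝ hm (hf.toLp f) : α → ℝ) 2 μ := Lp.memLp _
  have hgm : AEStronglyMeasurable[m] (condExpL2 ℝ ℝ hm (hf.toLp f) : α → ℝ) μ :=
    aestronglyMeasurable_condExpL2 hm _
  have heq : (condExpL2 ℝ ℝ hm (hf.toLp f) : α → ℝ) =ᵐ[μ] μ[f|m] := by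
    refine ae_eq_condExp_of_forall_setIntegral_eq hm (hf.integrable one_le_two) ?_ ?_ hgm
    · intro s _ _
      exact (hg2.integrable one_le_two).integrableOn
    · intro s hs hμs
      have h := integral_condExpL2_eq (E' := ℝ) (𝕜 := ℝ) hm (hf.toLp f) hs hμs.ne
      rw [h]
      exact setIntegral_congr_ae (hm s hs) ((MemLp.coeFn_toLp hf).mono fun x hx _ => hx)
  exact hg2.ae_eq heq

end Aux

set_option maxHeartbeats 1000000

/-- (Proposition 1) OOD minimax optimality of the invariant predictor `m ∘ Φ*` for square
loss: under the invariance condition (the conditional mean of `Y^e` given `Φ*(X^e)` is `m`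
with constant conditional second moment `ξ²` of the residual) and the existence of an
environment `q` in which `Y^q ⟂ X^q | σ(Φ*(X^q))`, the worst-case risk of `m ∘ Φ*` is `ξ²`
and every measurable predictor has worst-case risk at least `ξ²`. -/
theorem stmt0
    {ι 𝒳 𝒵 : Type*} [MeasurableSpace 𝒳] [MeasurableSpace 𝒵]
    {Ω : ι → Type*} [∀ e, MeasurableSpace (Ω e)]
    [∀ e, StandardBorelSpace (Ω e)] [∀ e, Nonempty (Ω e)]
    (μ : ∀ e, Measure (Ω e)) [∀ e, IsProbabilityMeasure (μ e)]
    (X : ∀ e, Ω e → 𝒳) (Y : ∀ e, Ω e → ℝ)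
    (hX : ∀ e, Measurable (X e)) (hY : ∀ e, Measurable (Y e))
    (hY2 : ∀ e, MemLp (Y e) 2 (μ e))
    (Φs : 𝒳 → 𝒵) (hΦs : Measurable Φs) (m : 𝒵 → ℝ) (hm : Measurable m)
    (ξ : ℝ) (hξ : 0 ≤ ξ)
    (hcond : ∀ e,
      (μ e)[Y e|MeasurableSpace.comap (fun ω => Φs (X e ω)) inferInstance]
        =ᵐ[μ e] fun ω => m (Φs (X e ω)))
    (hvar : ∀ e,
      (μ e)[fun ω => (Y e ω - m (Φs (X e ω))) ^ 2|
          MeasurableSpace.comap (fun ω => Φs (X e ω)) inferInstance]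
        =ᵐ[μ e] fun _ => ξ ^ 2)
    (q : ι)
    (hq : CondIndepFun
      (MeasurableSpace.comap (fun ω => Φs (X q ω)) inferInstance)
      (measurable_iff_comap_le.mp (hΦs.comp (hX q))) (Y q) (X q) (μ q)) :
    (⨆ e, ∫⁻ ω, ENNReal.ofReal ((Y e ω - m (Φs (X e ω))) ^ 2) ∂μ e)
        = ENNReal.ofReal (ξ ^ 2) ∧
      ∀ f : 𝒳 → ℝ, Measurable f →
        ENNReal.ofReal (ξ ^ 2) ≤ ⨆ e, ∫⁻ ω, ENNReal.ofReal ((Y e ω - f (X e ω)) ^ 2) ∂μ e := by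
  haveI : Nonempty ι := ⟨q⟩
  have hle : ∀ e, (MeasurableSpace.comap (fun ω => Φs (X e ω)) inferInstance)
      ≤ (inferInstance : MeasurableSpace (Ω e)) :=
    fun e => measurable_iff_comap_le.mp (hΦs.comp (hX e))
  have hSF : ∀ e, SigmaFinite ((μ e).trim (hle e)) := fun e => by
    haveI := isFiniteMeasure_trim (μ := μ e) (hle e); infer_instance
  set Z : ∀ e, Ω e → ℝ := fun e ω => m (Φs (X e ω)) with hZdef
  have hcond' : ∀ e,
      (μ e)[Y e|MeasurableSpace.comap (fun ω => Φs (X e ω)) inferInstance] =ᵐ[μ e] Z e := hcond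
  have hvar' : ∀ e,
      (μ e)[fun ω => (Y e ω - Z e ω) ^ 2|
        MeasurableSpace.comap (fun ω => Φs (X e ω)) inferInstance]
        =ᵐ[μ e] fun _ => ξ ^ 2 := hvar
  have hZmeas : ∀ e, Measurable (Z e) := fun e => hm.comp (hΦs.comp (hX e))
  have hΦX : ∀ e, Measurable[MeasurableSpace.comap (fun ω => Φs (X e ω)) inferInstance]
      (fun ω => Φs (X e ω)) := fun e => measurable_iff_comap_le.mpr le_rfl
  have hZm' : ∀ e, StronglyMeasurable[MeasurableSpace.comap (fun ω => Φs (X e ω)) inferInstance]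
      (Z e) := fun e => (hm.comp (hΦX e)).stronglyMeasurable
  have hYint : ∀ e, Integrable (Y e) (μ e) := fun e => (hY2 e).integrable one_le_two
  have hZ2 : ∀ e, MemLp (Z e) 2 (μ e) := fun e =>
    (memℒp_two_condexp (hle e) (hY2 e)).ae_eq (hcond' e)
  have hZint : ∀ e, Integrable (Z e) (μ e) := fun e => (hZ2 e).integrable one_le_two
  have hW2 : ∀ e, MemLp (fun ω => Y e ω - Z e ω) 2 (μ e) := fun e => (hY2 e).sub (hZ2 e)
  have hWsq : ∀ e, Integrable (fun ω => (Y e ω - Z e ω) ^ 2) (μ e) := fun e =>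
    (hW2 e).integrable_sq
  have hIW : ∀ e, ∫ ω, (Y e ω - Z e ω) ^ 2 ∂μ e = ξ ^ 2 := by
    intro e
    haveI := hSF e
    have h1 := integral_condExp (hle e)
      (f := fun ω => (Y e ω - Z e ω) ^ 2) (μ := μ e)
    rw [← h1, integral_congr_ae (hvar' e)]
    simp
  have key : ∀ e, ∫⁻ ω, ENNReal.ofReal ((Y e ω - Z e ω) ^ 2) ∂μ e = ENNReal.ofReal (ξ ^ 2) := by
    intro e
    rw [← ofReal_integral_eq_lintegral_ofReal (hWsq e)
      (Filter.Eventually.of_forall fun ω => sq_nonneg _), hIW e]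
  constructor
  · have key' : ∀ e, ∫⁻ ω, ENNReal.ofReal ((Y e ω - m (Φs (X e ω))) ^ 2) ∂μ e
        = ENNReal.ofReal (ξ ^ 2) := key
    simp only [key']
    exact iSup_const
  · -- minimax lower bound
    intro f hf
    haveI := hSF q
    have hmX := measurable_iff_comap_le.mp (hX q)
    haveI hSFX : SigmaFinite ((μ q).trim hmX) := by
      haveI := isFiniteMeasure_trim (μ := μ q) hmX; infer_instance
    have hm'X : (MeasurableSpace.comap (fun ω => Φs (X q ω)) inferInstance
          : MeasurableSpace (Ω q))
        ≤ MeasurableSpace.comap (X q) inferInstance := by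
      have h1 : (MeasurableSpace.comap Φs inferInstance).comap (X q)
          = MeasurableSpace.comap (fun ω => Φs (X q ω)) inferInstance :=
        MeasurableSpace.comap_comp
      rw [← h1]
      exact MeasurableSpace.comap_mono (measurable_iff_comap_le.mp hΦs)
    set κ := condExpKernel (μ q)
      (MeasurableSpace.comap (fun ω => Φs (X q ω)) inferInstance) with hκdef
    -- the key conditional-expectation identity: E[Y|σ(X)] = Z in environment q
    have hYX : (μ q)[Y q|(MeasurableSpace.comap (X q) inferInstance)] =ᵐ[μ q] Z q := by
      symm
      refine ae_eq_condExp_of_forall_setIntegral_eq hmX (hYint q)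
        (fun s _ _ => (hZint q).integrableOn) ?_
        (((hZm' q).mono hm'X).aestronglyMeasurable)
      rintro s ⟨t, ht, rfl⟩ -
      set B : Set (Ω q) := X q ⁻¹' t with hBdef
      have hB : MeasurableSet B := hX q ht
      -- kernel-level independence
      have hker := (Kernel.indepFun_iff_measure_inter_preimage_eq_mul.mp hq)
      have hae : ∀ᵐ ω ∂μ q, ∀ r : ℚ,
          κ ω (Y q ⁻¹' Set.Iic (r : ℝ) ∩ B) = κ ω (Y q ⁻¹' Set.Iic (r : ℝ)) * κ ω B := by
        rw [ae_all_iff]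
        intro r
        exact ae_of_ae_trim _ (hker (Set.Iic (r : ℝ)) t measurableSet_Iic ht)
      have hmap : ∀ᵐ ω ∂μ q,
          Measure.map (Y q) ((κ ω).restrict B) = κ ω B • Measure.map (Y q) (κ ω) := by
        filter_upwards [hae] with ω hω
        haveI : IsFiniteMeasure (Measure.map (Y q) ((κ ω).restrict B)) :=
          Measure.isFiniteMeasure_map _ _
        refine ext_of_generate_finite _
          (BorelSpace.measurable_eq.trans Real.borel_eq_generateFrom_Iic_rat)
          Real.isPiSystem_Iic_rat ?_ ?_
        · rintro s hs
          simp only [Set.mem_iUnion, Set.mem_singleton_iff] at hs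
          obtain ⟨r, rfl⟩ := hs
          rw [Measure.map_apply (hY q) measurableSet_Iic,
            Measure.restrict_apply (hY q measurableSet_Iic), Measure.smul_apply,
            Measure.map_apply (hY q) measurableSet_Iic, smul_eq_mul]
          exact (hω r).trans (mul_comm _ _)
        · rw [Measure.map_apply (hY q) MeasurableSet.univ, Set.preimage_univ,
            Measure.restrict_apply MeasurableSet.univ, Set.univ_inter, Measure.smul_apply,
            Measure.map_apply (hY q) MeasurableSet.univ, Set.preimage_univ, measure_univ,
            smul_eq_mul, mul_one]
      have hintY : ∀ᵐ ω ∂μ q,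
          ∫ y in B, Y q y ∂κ ω = (κ ω B).toReal * ∫ y, Y q y ∂κ ω := by
        filter_upwards [hmap] with ω hω
        have h1 : ∫ y in B, Y q y ∂κ ω = ∫ z, z ∂Measure.map (Y q) ((κ ω).restrict B) :=
          (integral_map (hY q).aemeasurable aestronglyMeasurable_id).symm
        have h2 : ∫ z, z ∂Measure.map (Y q) (κ ω) = ∫ y, Y q y ∂κ ω :=
          integral_map (hY q).aemeasurable aestronglyMeasurable_id
        rw [h1, hω, integral_smul_measure, h2, smul_eq_mul]
      -- conditional expectation identities
      have hind : Integrable (B.indicator (Y q)) (μ q) := (hYint q).indicator hB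
      have hc1 : (μ q)[B.indicator (Y q)|(MeasurableSpace.comap (fun ω => Φs (X q ω)) inferInstance)] =ᵐ[μ q] fun ω => ∫ y in B, Y q y ∂κ ω := by
        refine (condExp_ae_eq_integral_condExpKernel (hle q) hind).trans
          (Filter.Eventually.of_forall fun ω => ?_)
        exact integral_indicator hB
      have hc2 : (μ q)[Y q|(MeasurableSpace.comap (fun ω => Φs (X q ω)) inferInstance)] =ᵐ[μ q] fun ω => ∫ y, Y q y ∂κ ω :=
        condExp_ae_eq_integral_condExpKernel (hle q) (hYint q)
      have hG : (fun ω => (κ ω B).toReal) =ᵐ[μ q] (μ q)⟦B|(MeasurableSpace.comap (fun ω => Φs (X q ω)) inferInstance)⟧ :=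
        condExpKernel_ae_eq_condExp (hle q) hB
      -- LHS: ∫ Y over B
      have e1 : ∫ ω in B, Y q ω ∂μ q = ∫ ω, (κ ω B).toReal * Z q ω ∂μ q := by
        rw [← integral_indicator hB, ← integral_condExp (hle q) (f := B.indicator (Y q))]
        refine integral_congr_ae ?_
        filter_upwards [hc1, hintY, hc2, hcond' q] with ω h1 h2 h3 h4
        rw [h1, h2]
        congr 1
        rw [← h4, ← h3]
      -- RHS: ∫ Z over B
      have e2 : ∫ ω in B, Z q ω ∂μ q = ∫ ω, (κ ω B).toReal * Z q ω ∂μ q := by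
        set I1 : Ω q → ℝ := B.indicator (fun _ => (1 : ℝ)) with hI1def
        have hI1int : Integrable I1 (μ q) := (integrable_const (1 : ℝ)).indicator hB
        have hprod : (fun ω => Z q ω * I1 ω) = B.indicator (Z q) := by
          funext ω
          by_cases hω : ω ∈ B <;>
            simp [hI1def, Set.indicator_of_mem, Set.indicator_of_notMem, hω]
        have hZI1int : Integrable (Z q * I1) (μ q) := by
          have h0 : Integrable (B.indicator (Z q)) (μ q) := (hZint q).indicator hB
          exact h0.congr (Filter.Eventually.of_forall fun ω => (congrFun hprod ω).symm)
        have hmul := condExp_mul_of_stronglyMeasurable_left (μ := μ q) (m := (MeasurableSpace.comap (fun ω => Φs (X q ω)) inferInstance)) (hZm' q)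
          hZI1int hI1int
        rw [← integral_indicator hB, ← hprod,
          ← integral_condExp (hle q) (f := fun ω => Z q ω * I1 ω)]
        refine integral_congr_ae ?_
        filter_upwards [hmul, hG] with ω h1 h2
        have h3 : ((μ q)[fun ω => Z q ω * I1 ω|(MeasurableSpace.comap (fun ω => Φs (X q ω)) inferInstance)]) ω = ((μ q)[Z q * I1|(MeasurableSpace.comap (fun ω => Φs (X q ω)) inferInstance)]) ω := rfl
        rw [h3, h1]
        simp only [Pi.mul_apply]
        rw [← h2, mul_comm]
      rw [e2, e1]
    -- main computation in environment q
    by_cases hint : Integrable (fun ω => (Y q ω - f (X q ω)) ^ 2) (μ q)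
    · refine le_trans ?_ (le_iSup
        (fun e => ∫⁻ ω, ENNReal.ofReal ((Y e ω - f (X e ω)) ^ 2) ∂μ e) q)
      set D : Ω q → ℝ := fun ω => Z q ω - f (X q ω) with hDdef
      set W : Ω q → ℝ := fun ω => Y q ω - Z q ω with hWdef
      have hfXsm : AEStronglyMeasurable (fun ω => Y q ω - f (X q ω)) (μ q) :=
        ((hY q).sub (hf.comp (hX q))).aestronglyMeasurable
      have hYf2 : MemLp (fun ω => Y q ω - f (X q ω)) 2 (μ q) :=
        (memLp_two_iff_integrable_sq hfXsm).mpr hint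
      have hfX2 : MemLp (fun ω => f (X q ω)) 2 (μ q) :=
        ((hY2 q).sub hYf2).ae_eq
          (Filter.Eventually.of_forall fun ω => by simp only [Pi.sub_apply]; ring)
      have hD2 : MemLp D 2 (μ q) := (hZ2 q).sub hfX2
      have hfXmX : Measurable[(MeasurableSpace.comap (X q) inferInstance)] (fun ω => f (X q ω)) :=
        hf.comp (measurable_iff_comap_le.mpr le_rfl)
      have hDmX : StronglyMeasurable[(MeasurableSpace.comap (X q) inferInstance)] D :=
        StronglyMeasurable.sub ((hZm' q).mono hm'X) hfXmX.stronglyMeasurable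
      have hWint : Integrable W (μ q) := (hW2 q).integrable one_le_two
      have hWD_int : Integrable (fun ω => D ω * W ω) (μ q) :=
        integrable_mul_of_memL2 hD2 (hW2 q)
      have hcondW : (μ q)[W|(MeasurableSpace.comap (X q) inferInstance)] =ᵐ[μ q] fun _ => (0 : ℝ) := by
        have hsub : (μ q)[W|(MeasurableSpace.comap (X q) inferInstance)] =ᵐ[μ q] (μ q)[Y q|(MeasurableSpace.comap (X q) inferInstance)] - (μ q)[Z q|(MeasurableSpace.comap (X q) inferInstance)] := by
          have hWYZ : W = Y q - Z q := rfl
          rw [hWYZ]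
          exact condExp_sub (hYint q) (hZint q) _
        have hZfix : (μ q)[Z q|(MeasurableSpace.comap (X q) inferInstance)] = Z q :=
          condExp_of_stronglyMeasurable hmX ((hZm' q).mono hm'X) (hZint q)
        filter_upwards [hsub, hYX] with ω h1 h2
        rw [h1, Pi.sub_apply, h2, hZfix, sub_self]
      have hIWD : ∫ ω, D ω * W ω ∂μ q = 0 := by
        rw [← integral_condExp hmX (f := fun ω => D ω * W ω)]
        have hmulc := condExp_mul_of_stronglyMeasurable_left (μ := μ q) (m := (MeasurableSpace.comap (X q) inferInstance)) hDmX
          hWD_int hWint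
        have h0 : ∫ ω, ((μ q)[fun ω => D ω * W ω|(MeasurableSpace.comap (X q) inferInstance)]) ω ∂μ q = ∫ _ω, (0 : ℝ) ∂μ q := by
          refine integral_congr_ae ?_
          have heq : (μ q)[fun ω => D ω * W ω|(MeasurableSpace.comap (X q) inferInstance)] = (μ q)[D * W|(MeasurableSpace.comap (X q) inferInstance)] := rfl
          rw [heq]
          filter_upwards [hmulc, hcondW] with ω h1 h2
          rw [h1, Pi.mul_apply, h2, mul_zero]
        rw [h0, integral_zero]
      have hexp : ∀ ω, (Y q ω - f (X q ω)) ^ 2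
          = (Y q ω - Z q ω) ^ 2 + (2 * (D ω * W ω) + D ω ^ 2) := by
        intro ω
        simp only [hDdef, hWdef]
        ring
      have hIfinal : ∫ ω, (Y q ω - f (X q ω)) ^ 2 ∂μ q = ξ ^ 2 + ∫ ω, D ω ^ 2 ∂μ q := by
        have i1 : ∫ ω, ((Y q ω - Z q ω) ^ 2 + (2 * (D ω * W ω) + D ω ^ 2)) ∂μ q
            = (∫ ω, (Y q ω - Z q ω) ^ 2 ∂μ q) + ∫ ω, (2 * (D ω * W ω) + D ω ^ 2) ∂μ q :=
          integral_add (hWsq q) ((hWD_int.const_mul 2).add hD2.integrable_sq)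
        have i2 : ∫ ω, (2 * (D ω * W ω) + D ω ^ 2) ∂μ q
            = (∫ ω, 2 * (D ω * W ω) ∂μ q) + ∫ ω, D ω ^ 2 ∂μ q :=
          integral_add (hWD_int.const_mul 2) hD2.integrable_sq
        have i3 : ∫ ω, 2 * (D ω * W ω) ∂μ q = 2 * ∫ ω, D ω * W ω ∂μ q :=
          integral_const_mul 2 _
        rw [integral_congr_ae (Filter.Eventually.of_forall hexp), i1, i2, i3, hIWD, hIW q]
        ring
      have hge : ξ ^ 2 ≤ ∫ ω, (Y q ω - f (X q ω)) ^ 2 ∂μ q := by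
        rw [hIfinal]
        have h0 : 0 ≤ ∫ ω, D ω ^ 2 ∂μ q := integral_nonneg fun ω => sq_nonneg _
        linarith
      calc ENNReal.ofReal (ξ ^ 2) ≤ ENNReal.ofReal (∫ ω, (Y q ω - f (X q ω)) ^ 2 ∂μ q) :=
            ENNReal.ofReal_le_ofReal hge
        _ = ∫⁻ ω, ENNReal.ofReal ((Y q ω - f (X q ω)) ^ 2) ∂μ q :=
            ofReal_integral_eq_lintegral_ofReal hint
              (Filter.Eventually.of_forall fun ω => sq_nonneg _)
    · have htop : ∫⁻ ω, ENNReal.ofReal ((Y q ω - f (X q ω)) ^ 2) ∂μ q = ⊤ := by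
        by_contra h
        apply hint
        have hmeas : Measurable (fun ω => (Y q ω - f (X q ω)) ^ 2) :=
          ((hY q).sub (hf.comp (hX q))).pow_const 2
        refine ⟨hmeas.aestronglyMeasurable, ?_⟩
        rw [hasFiniteIntegral_iff_norm]
        have h1 : ∫⁻ ω, ENNReal.ofReal ‖(Y q ω - f (X q ω)) ^ 2‖ ∂μ q
            = ∫⁻ ω, ENNReal.ofReal ((Y q ω - f (X q ω)) ^ 2) ∂μ q :=
          lintegral_congr fun ω => by rw [Real.norm_of_nonneg (sq_nonneg _)]
        rw [h1]
        exact lt_top_iff_ne_top.mpr h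
      calc ENNReal.ofReal (ξ ^ 2) ≤ ⊤ := le_top
        _ = ∫⁻ ω, ENNReal.ofReal ((Y q ω - f (X q ω)) ^ 2) ∂μ q := htop.symm
        _ ≤ ⨆ e, ∫⁻ ω, ENNReal.ofReal ((Y e ω - f (X e ω)) ^ 2) ∂μ e := le_iSup
            (fun e => ∫⁻ ω, ENNReal.ofReal ((Y e ω - f (X e ω)) ^ 2) ∂μ e) q
end

section
/- (Lemma 3, representativeness implies approximate optimality of empirical IRM) Let H be a finite nonempty set, R, R̂, R', R̂' : H → ℝ, ε > 0 and ν > 0. Define κ := min over Φ ∈ H of |R'(Φ) − ε| and suppose κ > 0, |R̂'(Φ) − R'(Φ)| ≤ κ/2 for every Φ ∈ H, and |R̂(Φ) − R(Φ)| ≤ ν/2 for every Φ ∈ H. Set S := {Φ ∈ H : R'(Φ) ≤ ε} and Ŝ := {Φ ∈ H : R̂'(Φ) ≤ ε}, and suppose S is nonempty. Then every minimizer Φ̂ of R̂ over Ŝ satisfies Φ̂ ∈ S and R(Φ*) ≤ R(Φ̂) ≤ R(Φ*) + ν, where Φ* is any minimizer of R over S. -/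
/-- (Lemma 3) Representativeness of the risk and IRM-penalty estimates implies that every
empirical IRM minimizer is an approximate population IRM minimizer. -/
theorem stmt4 {H : Type*} [Fintype H] [Nonempty H]
    (R Rhat R' R'hat : H → ℝ) (ε ν : ℝ) (hε : 0 < ε) (hν : 0 < ν)
    (κ : ℝ) (hκdef : κ = ⨅ Φ : H, |R' Φ - ε|) (hκpos : 0 < κ)
    (hrep' : ∀ Φ : H, |R'hat Φ - R' Φ| ≤ κ / 2)
    (hrep : ∀ Φ : H, |Rhat Φ - R Φ| ≤ ν / 2)
    (S Shat : Set H) (hS : S = {Φ : H | R' Φ ≤ ε}) (hShat : Shat = {Φ : H | R'hat Φ ≤ ε})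
    (hSne : S.Nonempty)
    (Φhat : H) (hΦhat : Φhat ∈ Shat ∧ ∀ Φ ∈ Shat, Rhat Φhat ≤ Rhat Φ)
    (Φstar : H) (hΦstar : Φstar ∈ S ∧ ∀ Φ ∈ S, R Φstar ≤ R Φ) :
    Φhat ∈ S ∧ R Φstar ≤ R Φhat ∧ R Φhat ≤ R Φstar + ν := by
  have hκle : ∀ Φ : H, κ ≤ |R' Φ - ε| := by
    intro Φ
    rw [hκdef]
    exact ciInf_le (Set.Finite.bddBelow (Set.finite_range _)) Φ
  have hSeq : S = Shat := by
    ext Φ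
    have h1 := abs_le.mp (hrep' Φ)
    have h2 := hκle Φ
    rw [hS, hShat]
    simp only [Set.mem_setOf_eq]
    constructor
    · intro h
      cases' abs_choice (R' Φ - ε) with hc hc <;> linarith
    · intro h
      by_contra hlt
      push_neg at hlt
      cases' abs_choice (R' Φ - ε) with hc hc <;> linarith
  obtain ⟨hmem, hmin⟩ := hΦhat
  obtain ⟨hmems, hmins⟩ := hΦstar
  have hhatS : Φhat ∈ S := hSeq ▸ hmem
  have h3 := abs_le.mp (hrep Φhat)
  have h4 := abs_le.mp (hrep Φstar)
  have h5 := hmin Φstar (hSeq ▸ hmems)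
  refine ⟨hhatS, hmins _ hhatS, by linarith⟩
end

section
/- (Proposition 2, sample complexity of empirical IRM over a finite hypothesis class) Let E_tr be a finite set of environments, π = (π_e) a probability vector with π_e > 0 for each e ∈ E_tr, and P_e a probability measure on 𝒳 × ℝ for each e. Let H be a finite nonempty set of measurable functions Φ : 𝒳 → ℝ. For the square loss ℓ(Φ(x), y) := (Φ(x) − y)² and its scalar-classifier gradient g(Φ, x, y) := 2·Φ(x)·(Φ(x) − y), assume |ℓ(Φ(x), y)| ≤ L and |g(Φ, x, y)| ≤ L' for all Φ ∈ H and P_e-almost all (x, y) in every environment. Define R(Φ) := Σ_e π_e·∫ ℓ(Φ(x), y) dP_e and R'(Φ) := Σ_e π_e·(∫ g(Φ, x, y) dP_e)². Let R̂ be the empirical mean of ℓ over n i.i.d. samples (e_i, X_i, Y_i) from the mixture P̄ := Σ_e π_e·(δ_e ⊗ P_e), and let R̂' be the empirical mean of g(Φ, X_j, Y_j)·g(Φ, X̃_j, Ỹ_j) over ⌊n/2⌋ i.i.d. samples (ẽ_j, (X_j, Y_j), (X̃_j, Ỹ_j)) from P̃ := Σ_e π_e·(δ_e ⊗ P_e ⊗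 P_e). Let ε > 0, ν > 0, δ ∈ (0,1), set κ := min over Φ ∈ H of |R'(Φ) − ε|, and suppose κ > 0 and {Φ ∈ H : R'(Φ) ≤ ε} is nonempty. If n ≥ max{16L'⁴/κ², 8L²/ν²}·log(4|H|/δ), then with probability at least 1 − δ every minimizer Φ̂ of R̂ over {Φ ∈ H : R̂'(Φ) ≤ ε} satisfies R'(Φ̂) ≤ ε and R(Φ*) ≤ R(Φ̂) ≤ R(Φ*) + ν, where Φ* is any minimizer of R over {Φ ∈ H : R'(Φ) ≤ ε}. -/
open MeasureTheory

private def irmF1 {𝒳 : Type*} (E : Type*) (Φ : 𝒳 → ℝ) (q : E × 𝒳 × ℝ) : ℝ :=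
  (Φ q.2.1 - q.2.2) ^ 2

private def irmF2 {𝒳 : Type*} (E : Type*) (Φ : 𝒳 → ℝ) (q : E × ((𝒳 × ℝ) × (𝒳 × ℝ))) : ℝ :=
  (2 * Φ q.2.1.1 * (Φ q.2.1.1 - q.2.1.2)) * (2 * Φ q.2.2.1 * (Φ q.2.2.1 - q.2.2.2))

private lemma hoeff_key (p : ℝ) (hp0 : 0 ≤ p) (hp1 : p ≤ 1) (u : ℝ) :
    Real.log (1 - p + p * Real.exp u) ≤ p * u + u ^ 2 / 8 := by
  have hD : ∀ v : ℝ, 0 < 1 - p + p * Real.exp v := by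
    intro v
    rcases eq_or_lt_of_le hp0 with h | h
    · simp [← h]
    · nlinarith [Real.exp_pos v]
  set F : ℝ → ℝ := fun v => p * v + v ^ 2 / 8 - Real.log (1 - p + p * Real.exp v) with hF
  set G : ℝ → ℝ := fun v => p + v / 4 - p * Real.exp v / (1 - p + p * Real.exp v) with hG
  have hDd : ∀ v : ℝ, HasDerivAt (fun w => 1 - p + p * Real.exp w) (p * Real.exp v) v := by
    intro v
    exact ((Real.hasDerivAt_exp v).const_mul p).const_add (1 - p)
  have hF' : ∀ v : ℝ, HasDerivAt F (G v) v := by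
    intro v
    have h1 : HasDerivAt (fun w : ℝ => p * w) p v := by
      simpa using (hasDerivAt_id v).const_mul p
    have h2 : HasDerivAt (fun w : ℝ => w ^ 2 / 8) (v / 4) v := by
      have := (hasDerivAt_pow 2 v).div_const 8
      exact this.congr_deriv (by ring)
    have h3 : HasDerivAt (fun w => Real.log (1 - p + p * Real.exp w))
        (p * Real.exp v / (1 - p + p * Real.exp v)) v :=
      (hDd v).log (ne_of_gt (hD v))
    exact (h1.add h2).sub h3
  have hG' : ∀ v : ℝ, HasDerivAt G
      (1 / 4 - (p * Real.exp v * (1 - p + p * Real.exp v)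
        - p * Real.exp v * (p * Real.exp v)) / (1 - p + p * Real.exp v) ^ 2) v := by
    intro v
    have h1 : HasDerivAt (fun w : ℝ => p + w / 4) (1 / 4) v := by
      simpa using ((hasDerivAt_id v).div_const 4).const_add p
    have h2 : HasDerivAt (fun w => p * Real.exp w / (1 - p + p * Real.exp w))
        ((p * Real.exp v * (1 - p + p * Real.exp v)
          - p * Real.exp v * (p * Real.exp v)) / (1 - p + p * Real.exp v) ^ 2) v := by
      exact ((Real.hasDerivAt_exp v).const_mul p).div (hDd v) (ne_of_gt (hD v))
    exact h1.sub h2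
  have hG'nonneg : ∀ v : ℝ, 0 ≤ 1 / 4 - (p * Real.exp v * (1 - p + p * Real.exp v)
      - p * Real.exp v * (p * Real.exp v)) / (1 - p + p * Real.exp v) ^ 2 := by
    intro v
    rw [sub_nonneg, div_le_iff₀ (by have := hD v; positivity)]
    nlinarith [sq_nonneg (p * Real.exp v - (1 - p)), Real.exp_pos v]
  have hGmono : Monotone G := by
    have hdiff : Differentiable ℝ G := fun v => (hG' v).differentiableAt
    refine monotone_of_deriv_nonneg hdiff (fun v => ?_)
    rw [(hG' v).deriv]
    exact hG'nonneg v
  have hG0 : G 0 = 0 := by simp [hG]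
  have hFd : Differentiable ℝ F := fun v => (hF' v).differentiableAt
  have key : ∀ v : ℝ, 0 ≤ F v := by
    intro v
    have hF0 : F 0 = 0 := by simp [hF]
    rcases le_or_gt 0 v with hv | hv
    · have hmono : MonotoneOn F (Set.Ici 0) := by
        refine monotoneOn_of_deriv_nonneg (convex_Ici 0) hFd.continuous.continuousOn
          (hFd.differentiableOn) (fun x hx => ?_)
        rw [(hF' x).deriv]
        rw [interior_Ici] at hx
        calc (0:ℝ) = G 0 := hG0.symm
        _ ≤ G x := hGmono (le_of_lt hx)
      have := hmono (Set.self_mem_Ici) hv hv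
      rw [hF0] at this; exact this
    · have hmono : AntitoneOn F (Set.Iic 0) := by
        refine antitoneOn_of_deriv_nonpos (convex_Iic 0) hFd.continuous.continuousOn
          (hFd.differentiableOn) (fun x hx => ?_)
        rw [(hF' x).deriv]
        rw [interior_Iic] at hx
        calc G x ≤ G 0 := hGmono (le_of_lt hx)
        _ = 0 := hG0
      have := hmono (le_of_lt hv) (Set.self_mem_Iic) (le_of_lt hv)
      rw [hF0] at this; exact this
  have := key u
  rw [hF] at this
  simp only at this
  linarith

private lemma mgf_bound {α : Type*} [MeasurableSpace α] (μ : Measure α) [IsProbabilityMeasure μ]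
    (f : α → ℝ) (hf : Measurable f) (a b h : ℝ) (hab : a < b)
    (hfb : ∀ᵐ x ∂μ, f x ∈ Set.Icc a b) (hmean : ∫ x, f x ∂μ = 0) :
    ∫ x, Real.exp (h * f x) ∂μ ≤ Real.exp (h ^ 2 * (b - a) ^ 2 / 8) := by
  have hba : 0 < b - a := sub_pos.mpr hab
  -- boundedness / integrability facts
  have hInt_f : Integrable f μ := by
    refine Integrable.mono' (integrable_const (max |a| |b|)) hf.aestronglyMeasurable ?_
    filter_upwards [hfb] with x hx
    rw [Real.norm_eq_abs, abs_le]
    have h1 := neg_abs_le a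
    have h2 := le_abs_self b
    have h3 := le_max_left |a| |b|
    have h4 := le_max_right |a| |b|
    exact ⟨by linarith [hx.1], by linarith [hx.2]⟩
  have ha0 : a ≤ 0 := by
    have : a ≤ ∫ x, f x ∂μ := by
      have : ∫ _ : α, a ∂μ ≤ ∫ x, f x ∂μ := by
        refine integral_mono_ae (integrable_const a) hInt_f ?_
        filter_upwards [hfb] with x hx using hx.1
      simpa using this
    linarith [hmean ▸ this]
  have hb0 : 0 ≤ b := by
    have : ∫ x, f x ∂μ ≤ ∫ _ : α, b ∂μ := by
      refine integral_mono_ae hInt_f (integrable_const b) ?_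
      filter_upwards [hfb] with x hx using hx.2
    rw [hmean] at this
    simpa using this
  -- integrability of exp (h * f)
  have hInt_exp : Integrable (fun x => Real.exp (h * f x)) μ := by
    refine Integrable.mono' (integrable_const (Real.exp (|h| * max |a| |b|)))
      (hf.const_mul h).exp.aestronglyMeasurable ?_
    filter_upwards [hfb] with x hx
    rw [Real.norm_eq_abs, abs_of_pos (Real.exp_pos _)]
    refine Real.exp_le_exp.mpr ?_
    have hfx : |f x| ≤ max |a| |b| := by
      rw [abs_le]
      have h1 := neg_abs_le a
      have h2 := le_abs_self b
      have h3 := le_max_left |a| |b|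
      have h4 := le_max_right |a| |b|
      exact ⟨by linarith [hx.1], by linarith [hx.2]⟩
    calc h * f x ≤ |h * f x| := le_abs_self _
    _ = |h| * |f x| := abs_mul _ _
    _ ≤ |h| * max |a| |b| := by
        exact mul_le_mul_of_nonneg_left hfx (abs_nonneg h)
  -- convexity bound pointwise
  set c1 : ℝ := (b * Real.exp (h * a) - a * Real.exp (h * b)) / (b - a) with hc1
  set c2 : ℝ := (Real.exp (h * b) - Real.exp (h * a)) / (b - a) with hc2
  have hptwise : ∀ᵐ x ∂μ, Real.exp (h * f x) ≤ c1 + c2 * f x := by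
    filter_upwards [hfb] with x hx
    have hw1 : 0 ≤ (b - f x) / (b - a) := div_nonneg (by linarith [hx.2]) hba.le
    have hw2 : 0 ≤ (f x - a) / (b - a) := div_nonneg (by linarith [hx.1]) hba.le
    have hw12 : (b - f x) / (b - a) + (f x - a) / (b - a) = 1 := by
      field_simp
      ring
    have hconv := convexOn_exp.2 (Set.mem_univ (h * a)) (Set.mem_univ (h * b)) hw1 hw2 hw12
    simp only [smul_eq_mul] at hconv
    have harg : (b - f x) / (b - a) * (h * a) + (f x - a) / (b - a) * (h * b) = h * f x := by
      field_simp
      ring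
    rw [harg] at hconv
    refine le_trans hconv (le_of_eq ?_)
    rw [hc1, hc2]
    field_simp
    ring
  -- integrate
  have hint_le : ∫ x, Real.exp (h * f x) ∂μ ≤ c1 := by
    have : ∫ x, Real.exp (h * f x) ∂μ ≤ ∫ x, c1 + c2 * f x ∂μ := by
      refine integral_mono_ae hInt_exp ?_ hptwise
      exact (integrable_const c1).add (hInt_f.const_mul c2)
    rw [integral_add (integrable_const c1) (hInt_f.const_mul c2),
      integral_const_mul, hmean] at this
    simpa using this
  refine le_trans hint_le ?_
  -- bound c1 using hoeff_key
  set p : ℝ := -a / (b - a) with hp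
  have hp0 : 0 ≤ p := div_nonneg (by linarith) hba.le
  have hp1 : p ≤ 1 := by
    rw [hp, div_le_one hba]
    linarith
  set u : ℝ := h * (b - a) with hu
  have hkey := hoeff_key p hp0 hp1 u
  have hDpos : 0 < 1 - p + p * Real.exp u := by
    rcases eq_or_lt_of_le hp0 with h' | h'
    · simp [← h']
    · nlinarith [Real.exp_pos u]
  have hc1eq : c1 = Real.exp (-p * u) * (1 - p + p * Real.exp u) := by
    have e1 : h * a = -p * u := by rw [hp, hu]; field_simp; try ring
    have e2 : h * b = -p * u + u := by rw [hp, hu]; field_simp; try ring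
    rw [hc1, e1, e2, Real.exp_add]
    have hbb : b = (1 - p) * (b - a) := by rw [hp]; field_simp; try ring
    have haa : -a = p * (b - a) := by rw [hp]; field_simp; try ring
    rw [div_eq_iff (ne_of_gt hba)]
    linear_combination Real.exp (-p * u) * hbb + Real.exp (-p * u) * Real.exp u * haa
  rw [hc1eq]
  have hD_le : 1 - p + p * Real.exp u ≤ Real.exp (p * u + u ^ 2 / 8) :=
    (Real.log_le_iff_le_exp hDpos).mp hkey
  calc Real.exp (-p * u) * (1 - p + p * Real.exp u)
      ≤ Real.exp (-p * u) * Real.exp (p * u + u ^ 2 / 8) :=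
        mul_le_mul_of_nonneg_left hD_le (Real.exp_pos _).le
    _ = Real.exp (u ^ 2 / 8) := by rw [← Real.exp_add]; ring_nf
    _ = Real.exp (h ^ 2 * (b - a) ^ 2 / 8) := by rw [hu]; ring_nf

private lemma chernoff {α : Type*} [MeasurableSpace α] (μ : Measure α) [IsProbabilityMeasure μ]
    (f : α → ℝ) (hf : Measurable f) (a b r t : ℝ) (hab : a < b)
    (hfb : ∀ᵐ x ∂μ, f x ∈ Set.Icc a b) (hr : ∫ x, f x ∂μ = r) (ht : 0 < t) (m : ℕ) :
    (Measure.pi fun _ : Fin m => μ) {ω | (m : ℝ) * t ≤ ∑ i, (f (ω i) - r)} ≤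
      ENNReal.ofReal (Real.exp (-2 * m * t ^ 2 / (b - a) ^ 2)) := by
  have hba : 0 < b - a := sub_pos.mpr hab
  set g : α → ℝ := fun x => f x - r with hg
  have hgmeas : Measurable g := hf.sub measurable_const
  have hgb : ∀ᵐ x ∂μ, g x ∈ Set.Icc (a - r) (b - r) := by
    filter_upwards [hfb] with x hx
    exact ⟨by simp [hg]; linarith [hx.1], by simp [hg]; linarith [hx.2]⟩
  have hInt_f : Integrable f μ := by
    refine Integrable.mono' (integrable_const (max |a| |b|)) hf.aestronglyMeasurable ?_
    filter_upwards [hfb] with x hx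
    rw [Real.norm_eq_abs, abs_le]
    have h1 := neg_abs_le a
    have h2 := le_abs_self b
    have h3 := le_max_left |a| |b|
    have h4 := le_max_right |a| |b|
    exact ⟨by linarith [hx.1], by linarith [hx.2]⟩
  have hgmean : ∫ x, g x ∂μ = 0 := by
    rw [hg]
    simp only
    rw [integral_sub hInt_f (integrable_const r)]
    simp [hr]
  set lam : ℝ := 4 * t / (b - a) ^ 2 with hlam
  have hlampos : 0 < lam := by positivity
  have hmgf : ∫ x, Real.exp (lam * g x) ∂μ ≤ Real.exp (lam ^ 2 * (b - a) ^ 2 / 8) := by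
    have := mgf_bound μ g hgmeas (a - r) (b - r) lam (by linarith) hgb hgmean
    convert this using 3
    ring
  set ν : Measure (Fin m → α) := Measure.pi fun _ => μ with hν
  haveI : IsProbabilityMeasure ν := Measure.pi.instIsProbabilityMeasure _
  -- a.e. coordinatewise bounds
  have hbadnull : μ {x | g x ∉ Set.Icc (a - r) (b - r)} = 0 := by
    rw [← ae_iff] at *
    exact hgb
  have hcoord : ∀ i : Fin m, ∀ᵐ ω ∂ν, g (ω i) ∈ Set.Icc (a - r) (b - r) := by
    intro i
    rw [ae_iff]
    have : {ω : Fin m → α | ¬ g (ω i) ∈ Set.Icc (a - r) (b - r)} =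
        Function.eval i ⁻¹' {x | g x ∉ Set.Icc (a - r) (b - r)} := rfl
    rw [this]
    exact Measure.pi_eval_preimage_null (μ := fun _ : Fin m => μ) hbadnull
  have hae : ∀ᵐ ω ∂ν, ∀ i, g (ω i) ∈ Set.Icc (a - r) (b - r) := ae_all_iff.mpr hcoord
  set W : (Fin m → α) → ℝ := fun ω => Real.exp (lam * ∑ i, g (ω i)) with hW
  have hWmeas : Measurable W := by
    apply Measurable.exp
    apply Measurable.const_mul
    exact Finset.measurable_sum _ (fun i _ => hgmeas.comp (measurable_pi_apply i))
  have hWnonneg : 0 ≤ᵐ[ν] W := ae_of_all _ (fun ω => (Real.exp_pos _).le)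
  have hWint : Integrable W ν := by
    refine Integrable.mono' (integrable_const (Real.exp (lam * (m * (b - r)))))
      hWmeas.aestronglyMeasurable ?_
    filter_upwards [hae] with ω hω
    rw [Real.norm_eq_abs, abs_of_pos (Real.exp_pos _)]
    refine Real.exp_le_exp.mpr (mul_le_mul_of_nonneg_left ?_ hlampos.le)
    calc ∑ i, g (ω i) ≤ ∑ _i : Fin m, (b - r) := Finset.sum_le_sum (fun i _ => (hω i).2)
    _ = m * (b - r) := by simp [Finset.sum_const, nsmul_eq_mul]; ring
  -- compute the integral of W via Fubini
  have hWint_eq : ∫ ω, W ω ∂ν = (∫ x, Real.exp (lam * g x) ∂μ) ^ m := by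
    letI : MeasureSpace α := ⟨μ⟩
    have hvol : ν = (volume : Measure (Fin m → α)) := by
      rw [MeasureTheory.volume_pi]
      rfl
    rw [hvol]
    have : ∀ ω : Fin m → α, W ω = ∏ i : Fin m, Real.exp (lam * g (ω i)) := by
      intro ω
      rw [hW]
      simp only
      rw [Finset.mul_sum, Real.exp_sum]
    simp_rw [this]
    rw [← hvol, hν]
    rw [MeasureTheory.integral_fintype_prod_eq_pow (ι := Fin m) (fun x => Real.exp (lam * g x))]
    rw [Fintype.card_fin]
  -- Markov
  have hmarkov := mul_meas_ge_le_integral_of_nonneg hWnonneg hWint (Real.exp (lam * (m * t)))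
  have hsubset : {ω : Fin m → α | (m : ℝ) * t ≤ ∑ i, (f (ω i) - r)} ⊆
      {ω | Real.exp (lam * (m * t)) ≤ W ω} := by
    intro ω hω
    simp only [Set.mem_setOf_eq] at hω ⊢
    exact Real.exp_le_exp.mpr (mul_le_mul_of_nonneg_left hω hlampos.le)
  have hfin1 : ν {ω | Real.exp (lam * (m * t)) ≤ W ω} ≠ ⊤ := measure_ne_top _ _
  have htoReal : (ν {ω : Fin m → α | (m : ℝ) * t ≤ ∑ i, (f (ω i) - r)}).toReal ≤
      Real.exp (-2 * m * t ^ 2 / (b - a) ^ 2) := by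
    have hm1 : (ν {ω : Fin m → α | (m : ℝ) * t ≤ ∑ i, (f (ω i) - r)}).toReal ≤
        (ν {ω | Real.exp (lam * (m * t)) ≤ W ω}).toReal :=
      ENNReal.toReal_mono hfin1 (measure_mono hsubset)
    have hm2 : (ν {ω | Real.exp (lam * (m * t)) ≤ W ω}).toReal ≤
        (∫ ω, W ω ∂ν) / Real.exp (lam * (m * t)) := by
      rw [le_div_iff₀ (Real.exp_pos _), mul_comm]
      exact hmarkov
    have hm3 : (∫ ω, W ω ∂ν) / Real.exp (lam * (m * t)) ≤
        Real.exp (-2 * m * t ^ 2 / (b - a) ^ 2) := by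
      rw [hWint_eq]
      have hE : (∫ x, Real.exp (lam * g x) ∂μ) ^ m ≤
          Real.exp (lam ^ 2 * (b - a) ^ 2 / 8) ^ m :=
        pow_le_pow_left₀ (integral_nonneg (fun x => (Real.exp_pos _).le)) hmgf m
      rw [div_le_iff₀ (Real.exp_pos _)]
      calc (∫ x, Real.exp (lam * g x) ∂μ) ^ m ≤ Real.exp (lam ^ 2 * (b - a) ^ 2 / 8) ^ m := hE
      _ = Real.exp ((m : ℝ) * (lam ^ 2 * (b - a) ^ 2 / 8)) := by
          rw [← Real.exp_nat_mul]
      _ = Real.exp (-2 * m * t ^ 2 / (b - a) ^ 2) * Real.exp (lam * (m * t)) := by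
          rw [← Real.exp_add]
          congr 1
          rw [hlam]
          field_simp
          ring
    linarith
  calc ν {ω : Fin m → α | (m : ℝ) * t ≤ ∑ i, (f (ω i) - r)} =
      ENNReal.ofReal ((ν {ω : Fin m → α | (m : ℝ) * t ≤ ∑ i, (f (ω i) - r)}).toReal) := by
        rw [ENNReal.ofReal_toReal (measure_ne_top _ _)]
  _ ≤ ENNReal.ofReal (Real.exp (-2 * m * t ^ 2 / (b - a) ^ 2)) := ENNReal.ofReal_le_ofReal htoReal

private lemma conc {α Ω' : Type*} [MeasurableSpace α] [MeasurableSpace Ω']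
    (Q : Measure Ω') [IsProbabilityMeasure Q] (μ : Measure α) [IsProbabilityMeasure μ]
    {m : ℕ} (D : Ω' → Fin m → α) (hD : Measure.map D Q = Measure.pi fun _ => μ)
    (f : α → ℝ) (hf : Measurable f) (a b r t : ℝ) (hab : a < b)
    (hfb : ∀ᵐ x ∂μ, f x ∈ Set.Icc a b) (hr : ∫ x, f x ∂μ = r) (ht : 0 < t) :
    Q {ω | (m : ℝ) * t ≤ |∑ i, f (D ω i) - m * r|} ≤
      ENNReal.ofReal (2 * Real.exp (-2 * m * t ^ 2 / (b - a) ^ 2)) := by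
  have hba : 0 < b - a := sub_pos.mpr hab
  have hDae : AEMeasurable D Q := by
    by_contra hc
    have h0 := Measure.map_of_not_aemeasurable hc
    rw [hD] at h0
    haveI : IsProbabilityMeasure (Measure.pi fun _ : Fin m => μ) :=
      Measure.pi.instIsProbabilityMeasure _
    have h1 : (Measure.pi fun _ : Fin m => μ) Set.univ = 1 := measure_univ
    rw [h0] at h1
    simp at h1
  set S1 : Set (Fin m → α) := {v | (m : ℝ) * t ≤ ∑ i, (f (v i) - r)} with hS1
  set S2 : Set (Fin m → α) := {v | (m : ℝ) * t ≤ ∑ i, ((fun x => -f x) (v i) - -r)} with hS2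
  have hS1m : MeasurableSet S1 := by
    apply measurableSet_le measurable_const
    exact Finset.measurable_sum _ (fun i _ => (hf.comp (measurable_pi_apply i)).sub
      measurable_const)
  have hS2m : MeasurableSet S2 := by
    apply measurableSet_le measurable_const
    exact Finset.measurable_sum _ (fun i _ => ((hf.comp (measurable_pi_apply i)).neg.sub
      measurable_const))
  have hsum : ∀ (φ : α → ℝ) (s : ℝ) (v : Fin m → α),
      ∑ i, (φ (v i) - s) = ∑ i, φ (v i) - m * s := by
    intro φ s v
    rw [Finset.sum_sub_distrib]
    simp [Finset.sum_const, nsmul_eq_mul]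
  have hsub : {ω | (m : ℝ) * t ≤ |∑ i, f (D ω i) - m * r|} ⊆ D ⁻¹' (S1 ∪ S2) := by
    intro ω hω
    simp only [Set.mem_setOf_eq] at hω
    rcases abs_cases (∑ i, f (D ω i) - m * r) with ⟨heq, _⟩ | ⟨heq, _⟩
    · left
      show (m : ℝ) * t ≤ ∑ i, (f (D ω i) - r)
      rw [hsum]
      linarith
    · right
      show (m : ℝ) * t ≤ ∑ i, (-f (D ω i) - -r)
      rw [hsum (fun x => -f x) (-r) (D ω)]
      rw [Finset.sum_neg_distrib]
      linarith
  have hc1 : (Measure.pi fun _ : Fin m => μ) S1 ≤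
      ENNReal.ofReal (Real.exp (-2 * m * t ^ 2 / (b - a) ^ 2)) :=
    chernoff μ f hf a b r t hab hfb hr ht m
  have hc2 : (Measure.pi fun _ : Fin m => μ) S2 ≤
      ENNReal.ofReal (Real.exp (-2 * m * t ^ 2 / (b - a) ^ 2)) := by
    have hnegb : ∀ᵐ x ∂μ, (fun x => -f x) x ∈ Set.Icc (-b) (-a) := by
      filter_upwards [hfb] with x hx
      exact ⟨neg_le_neg hx.2, neg_le_neg hx.1⟩
    have hnegr : ∫ x, (fun x => -f x) x ∂μ = -r := by
      simp only
      rw [integral_neg, hr]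
    have := chernoff μ (fun x => -f x) hf.neg (-b) (-a) (-r) t (by linarith) hnegb hnegr ht m
    have heq : (-2 * (m:ℝ) * t ^ 2 / (-a - -b) ^ 2) = (-2 * m * t ^ 2 / (b - a) ^ 2) := by
      ring_nf
    rw [heq] at this
    exact this
  calc Q {ω | (m : ℝ) * t ≤ |∑ i, f (D ω i) - m * r|} ≤ Q (D ⁻¹' (S1 ∪ S2)) :=
        measure_mono hsub
    _ = (Measure.map D Q) (S1 ∪ S2) :=
        (Measure.map_apply_of_aemeasurable hDae (hS1m.union hS2m)).symm
    _ = (Measure.pi fun _ : Fin m => μ) (S1 ∪ S2) := by rw [hD]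
    _ ≤ (Measure.pi fun _ : Fin m => μ) S1 + (Measure.pi fun _ : Fin m => μ) S2 :=
        measure_union_le _ _
    _ ≤ ENNReal.ofReal (Real.exp (-2 * m * t ^ 2 / (b - a) ^ 2)) +
        ENNReal.ofReal (Real.exp (-2 * m * t ^ 2 / (b - a) ^ 2)) := add_le_add hc1 hc2
    _ = ENNReal.ofReal (2 * Real.exp (-2 * m * t ^ 2 / (b - a) ^ 2)) := by
        rw [← ENNReal.ofReal_add (Real.exp_pos _).le (Real.exp_pos _).le]
        congr 1
        ring

private lemma mixture_ae {E β : Type*} [Fintype E] [MeasurableSpace E]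
    [MeasurableSingletonClass E] [MeasurableSpace β]
    (Pm : E → Measure β) [∀ e, IsProbabilityMeasure (Pm e)] (pr : E → ℝ)
    (f : E × β → ℝ) (hf : Measurable f) (C : ℝ)
    (hbd : ∀ e, ∀ᵐ p ∂Pm e, |f (e, p)| ≤ C) :
    ∀ᵐ q ∂(∑ e, ENNReal.ofReal (pr e) • (Measure.dirac e).prod (Pm e)), |f q| ≤ C := by
  rw [ae_iff]
  have hbadm : MeasurableSet {q : E × β | ¬ |f q| ≤ C} :=
    (measurableSet_le hf.abs measurable_const).compl
  rw [Measure.finset_sum_apply]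
  refine Finset.sum_eq_zero (fun e _ => ?_)
  rw [Measure.smul_apply, Measure.dirac_prod,
    Measure.map_apply measurable_prodMk_left hbadm]
  have : Pm e (Prod.mk e ⁻¹' {q : E × β | ¬ |f q| ≤ C}) = 0 := by
    have := hbd e
    rw [ae_iff] at this
    exact this
  rw [this, smul_zero]

private lemma mixture_integral {E β : Type*} [Fintype E] [MeasurableSpace E]
    [MeasurableSingletonClass E] [MeasurableSpace β]
    (Pm : E → Measure β) [∀ e, IsProbabilityMeasure (Pm e)] (pr : E → ℝ)
    (hπpos : ∀ e, 0 < pr e)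
    (f : E × β → ℝ) (hf : Measurable f) (C : ℝ)
    (hbd : ∀ e, ∀ᵐ p ∂Pm e, |f (e, p)| ≤ C) :
    ∫ q, f q ∂(∑ e, ENNReal.ofReal (pr e) • (Measure.dirac e).prod (Pm e)) =
      ∑ e, pr e * ∫ p, f (e, p) ∂Pm e := by
  have hInt_e : ∀ e, Integrable (fun p => f (e, p)) (Pm e) := by
    intro e
    refine Integrable.mono' (integrable_const C)
      (hf.comp measurable_prodMk_left).aestronglyMeasurable ?_
    filter_upwards [hbd e] with p hp
    simpa using hp
  have hInt : ∀ e, Integrable f ((Measure.dirac e).prod (Pm e)) := by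
    intro e
    rw [Measure.dirac_prod]
    exact (integrable_map_measure hf.aestronglyMeasurable
      measurable_prodMk_left.aemeasurable).mpr (hInt_e e)
  rw [integral_finset_sum_measure (fun e _ => (hInt e).smul_measure ENNReal.ofReal_ne_top)]
  refine Finset.sum_congr rfl (fun e _ => ?_)
  rw [integral_smul_measure, Measure.dirac_prod,
    integral_map measurable_prodMk_left.aemeasurable hf.aestronglyMeasurable,
    ENNReal.toReal_ofReal (hπpos e).le]
  rfl

set_option maxHeartbeats 2000000 in
/-- (Proposition 2) Sample complexity of empirical IRM over a finite hypothesis class: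
if the number of samples is at least `max{16L'⁴/κ², 8L²/ν²}·log(4|H|/δ)`, then with
probability at least `1 − δ` every minimizer of the empirical risk over the empirical
`ε`-invariant set lies in the population `ε`-invariant set and is a `ν`-approximate
minimizer of the population risk over that set. -/
theorem stmt6 {E 𝒳 : Type*} [Fintype E] [Nonempty E]
    [MeasurableSpace E] [MeasurableSingletonClass E] [MeasurableSpace 𝒳]
    (π : E → ℝ) (hπpos : ∀ e, 0 < π e) (hπ1 : ∑ e, π e = 1)
    (P : E → Measure (𝒳 × ℝ)) [∀ e, IsProbabilityMeasure (P e)]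
    (H : Finset (𝒳 → ℝ)) (hHne : H.Nonempty) (hHmeas : ∀ Φ ∈ H, Measurable Φ)
    (L L' : ℝ) (hLpos : 0 < L) (hL'pos : 0 < L')
    (hLbd : ∀ Φ ∈ H, ∀ e, ∀ᵐ p ∂P e, |(Φ p.1 - p.2) ^ 2| ≤ L)
    (hL'bd : ∀ Φ ∈ H, ∀ e, ∀ᵐ p ∂P e, |2 * Φ p.1 * (Φ p.1 - p.2)| ≤ L')
    (R R' : (𝒳 → ℝ) → ℝ)
    (hR : ∀ Φ, R Φ = ∑ e, π e * ∫ p, (Φ p.1 - p.2) ^ 2 ∂P e)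
    (hR' : ∀ Φ, R' Φ = ∑ e, π e * (∫ p, 2 * Φ p.1 * (Φ p.1 - p.2) ∂P e) ^ 2)
    (ε ν δ : ℝ) (hε : 0 < ε) (hν : 0 < ν) (hδ : δ ∈ Set.Ioo (0 : ℝ) 1)
    (κ : ℝ) (hκdef : κ = ⨅ Φ : {Φ : 𝒳 → ℝ // Φ ∈ H}, |R' Φ.val - ε|) (hκpos : 0 < κ)
    (hSne : ∃ Φ ∈ H, R' Φ ≤ ε)
    (Pbar : Measure (E × 𝒳 × ℝ)) [IsProbabilityMeasure Pbar]
    (hPbar : Pbar = ∑ e, ENNReal.ofReal (π e) • (Measure.dirac e).prod (P e))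
    (Ptil : Measure (E × ((𝒳 × ℝ) × (𝒳 × ℝ)))) [IsProbabilityMeasure Ptil]
    (hPtil : Ptil = ∑ e, ENNReal.ofReal (π e) • (Measure.dirac e).prod ((P e).prod (P e)))
    (n : ℕ)
    (hn : max (16 * L' ^ 4 / κ ^ 2) (8 * L ^ 2 / ν ^ 2)
      * Real.log (4 * (H.card : ℝ) / δ) ≤ (n : ℝ))
    (Ω' : Type*) [MeasurableSpace Ω'] (Q : Measure Ω') [IsProbabilityMeasure Q]
    (D : Ω' → Fin n → E × 𝒳 × ℝ)
    (Dt : Ω' → Fin (n / 2) → E × ((𝒳 × ℝ) × (𝒳 × ℝ)))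
    (hD : Measure.map D Q = Measure.pi fun _ => Pbar)
    (hDt : Measure.map Dt Q = Measure.pi fun _ => Ptil)
    (Rhat : (𝒳 → ℝ) → Ω' → ℝ)
    (hRhat : ∀ Φ ω', Rhat Φ ω' = (∑ i, (Φ (D ω' i).2.1 - (D ω' i).2.2) ^ 2) / (n : ℝ))
    (R'hat : (𝒳 → ℝ) → Ω' → ℝ)
    (hR'hat : ∀ Φ ω', R'hat Φ ω' = (∑ j,
        (2 * Φ (Dt ω' j).2.1.1 * (Φ (Dt ω' j).2.1.1 - (Dt ω' j).2.1.2)) *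
        (2 * Φ (Dt ω' j).2.2.1 * (Φ (Dt ω' j).2.2.1 - (Dt ω' j).2.2.2)))
      / ((n / 2 : ℕ) : ℝ)) :
    1 - δ ≤ (Q {ω' | ∀ Φhat ∈ H,
        (R'hat Φhat ω' ≤ ε ∧ ∀ Φ ∈ H, R'hat Φ ω' ≤ ε → Rhat Φhat ω' ≤ Rhat Φ ω') →
        R' Φhat ≤ ε ∧
          ∀ Φstar ∈ H, (R' Φstar ≤ ε ∧ ∀ Φ ∈ H, R' Φ ≤ ε → R Φstar ≤ R Φ) →
            R Φstar ≤ R Φhat ∧ R Φhat ≤ R Φstar + ν}).toReal := by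
  classical
  set c : ℝ := (H.card : ℝ) with hc
  have hc1 : (1 : ℝ) ≤ c := by
    rw [hc]
    exact_mod_cast Finset.card_pos.mpr hHne
  have hδ0 := hδ.1
  have hδ1 := hδ.2
  have hlog : 0 < Real.log (4 * c / δ) := by
    apply Real.log_pos
    rw [lt_div_iff₀ hδ0]
    nlinarith
  have hlog1 : 1 ≤ Real.log (4 * c / δ) := by
    rw [Real.le_log_iff_exp_le (by positivity)]
    have h1 := Real.exp_one_lt_d9
    have h2 : (4 : ℝ) ≤ 4 * c := by linarith
    have h3 : (4 : ℝ) * c ≤ 4 * c / δ := by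
      rw [le_div_iff₀ hδ0]
      nlinarith
    linarith
  have hnR : 8 * L ^ 2 * Real.log (4 * c / δ) ≤ (n : ℝ) * ν ^ 2 := by
    have h := le_trans (mul_le_mul_of_nonneg_right
      (le_max_right (16 * L' ^ 4 / κ ^ 2) (8 * L ^ 2 / ν ^ 2)) hlog.le) hn
    have heq : 8 * L ^ 2 * Real.log (4 * c / δ)
        = (8 * L ^ 2 / ν ^ 2 * Real.log (4 * c / δ)) * ν ^ 2 := by
      field_simp
    rw [heq]
    exact mul_le_mul_of_nonneg_right h (sq_nonneg ν)
  have hnR' : 16 * L' ^ 4 * Real.log (4 * c / δ) ≤ (n : ℝ) * κ ^ 2 := by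
    have h := le_trans (mul_le_mul_of_nonneg_right
      (le_max_left (16 * L' ^ 4 / κ ^ 2) (8 * L ^ 2 / ν ^ 2)) hlog.le) hn
    have heq : 16 * L' ^ 4 * Real.log (4 * c / δ)
        = (16 * L' ^ 4 / κ ^ 2 * Real.log (4 * c / δ)) * κ ^ 2 := by
      field_simp
    rw [heq]
    exact mul_le_mul_of_nonneg_right h (sq_nonneg κ)
  have hn0 : 0 < n := by
    rcases Nat.eq_zero_or_pos n with h0 | h
    · exfalso
      rw [h0] at hnR
      push_cast at hnR
      nlinarith
    · exact h
  have hn0' : 0 < (n : ℝ) := by exact_mod_cast hn0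
  -- κ gap
  have hκgap : ∀ Φ ∈ H, κ ≤ |R' Φ - ε| := by
    intro Φ hΦ
    rw [hκdef]
    exact ciInf_le ⟨0, by rintro x ⟨i, rfl⟩; exact abs_nonneg _⟩
      (⟨Φ, hΦ⟩ : {Φ : 𝒳 → ℝ // Φ ∈ H})
  -- measurability
  have hmf1 : ∀ Φ ∈ H, Measurable (irmF1 E Φ) := by
    intro Φ hΦ
    have hΦm := hHmeas Φ hΦ
    exact ((hΦm.comp measurable_snd.fst).sub measurable_snd.snd).pow_const 2
  have hmg : ∀ Φ ∈ H, Measurable (fun p : 𝒳 × ℝ => 2 * Φ p.1 * (Φ p.1 - p.2)) := by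
    intro Φ hΦ
    have hΦm := hHmeas Φ hΦ
    exact ((measurable_const.mul (hΦm.comp measurable_fst)).mul
      ((hΦm.comp measurable_fst).sub measurable_snd))
  have hmf2 : ∀ Φ ∈ H, Measurable (irmF2 E Φ) := by
    intro Φ hΦ
    have h := hmg Φ hΦ
    exact ((h.comp measurable_snd.fst).mul (h.comp measurable_snd.snd))
  -- a.e. bounds and means for f1
  have hf1bd : ∀ Φ ∈ H, ∀ᵐ q ∂Pbar, |irmF1 E Φ q| ≤ L := by
    intro Φ hΦ
    rw [hPbar]
    exact mixture_ae P π (irmF1 E Φ) (hmf1 Φ hΦ) L (fun e => hLbd Φ hΦ e)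
  have hf1mean : ∀ Φ ∈ H, ∫ q, irmF1 E Φ q ∂Pbar = R Φ := by
    intro Φ hΦ
    rw [hPbar, mixture_integral P π hπpos (irmF1 E Φ) (hmf1 Φ hΦ) L (fun e => hLbd Φ hΦ e), hR]
    rfl
  -- a.e. bounds and means for f2
  have hgprod : ∀ Φ ∈ H, ∀ e, ∀ᵐ w ∂(P e).prod (P e), |irmF2 E Φ (e, w)| ≤ L' ^ 2 := by
    intro Φ hΦ e
    have hbadm : MeasurableSet {p : 𝒳 × ℝ | ¬ |2 * Φ p.1 * (Φ p.1 - p.2)| ≤ L'} :=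
      (measurableSet_le (hmg Φ hΦ).abs measurable_const).compl
    have h1 : ∀ᵐ w ∂(P e).prod (P e), |2 * Φ w.1.1 * (Φ w.1.1 - w.1.2)| ≤ L' := by
      rw [ae_iff]
      have hset : {w : (𝒳 × ℝ) × (𝒳 × ℝ) | ¬ |2 * Φ w.1.1 * (Φ w.1.1 - w.1.2)| ≤ L'}
          = {p : 𝒳 × ℝ | ¬ |2 * Φ p.1 * (Φ p.1 - p.2)| ≤ L'} ×ˢ Set.univ := by
        ext ⟨w1, w2⟩
        simp [Set.mem_prod]
      rw [hset, Measure.prod_prod]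
      have h0 : P e {p : 𝒳 × ℝ | ¬ |2 * Φ p.1 * (Φ p.1 - p.2)| ≤ L'} = 0 := by
        have := hL'bd Φ hΦ e
        rw [ae_iff] at this
        exact this
      rw [h0, zero_mul]
    have h2 : ∀ᵐ w ∂(P e).prod (P e), |2 * Φ w.2.1 * (Φ w.2.1 - w.2.2)| ≤ L' := by
      rw [ae_iff]
      have hset : {w : (𝒳 × ℝ) × (𝒳 × ℝ) | ¬ |2 * Φ w.2.1 * (Φ w.2.1 - w.2.2)| ≤ L'}
          = Set.univ ×ˢ {p : 𝒳 × ℝ | ¬ |2 * Φ p.1 * (Φ p.1 - p.2)| ≤ L'} := by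
        ext ⟨w1, w2⟩
        simp [Set.mem_prod]
      rw [hset, Measure.prod_prod]
      have h0 : P e {p : 𝒳 × ℝ | ¬ |2 * Φ p.1 * (Φ p.1 - p.2)| ≤ L'} = 0 := by
        have := hL'bd Φ hΦ e
        rw [ae_iff] at this
        exact this
      rw [h0, mul_zero]
    filter_upwards [h1, h2] with w hw1 hw2
    have : |irmF2 E Φ (e, w)| = |2 * Φ w.1.1 * (Φ w.1.1 - w.1.2)|
        * |2 * Φ w.2.1 * (Φ w.2.1 - w.2.2)| := by
      rw [irmF2, abs_mul]
    rw [this, sq]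
    exact mul_le_mul hw1 hw2 (abs_nonneg _) hL'pos.le
  have hf2bd : ∀ Φ ∈ H, ∀ᵐ q ∂Ptil, |irmF2 E Φ q| ≤ L' ^ 2 := by
    intro Φ hΦ
    rw [hPtil]
    exact mixture_ae (fun e => (P e).prod (P e)) π (irmF2 E Φ) (hmf2 Φ hΦ) (L' ^ 2)
      (hgprod Φ hΦ)
  have hf2mean : ∀ Φ ∈ H, ∫ q, irmF2 E Φ q ∂Ptil = R' Φ := by
    intro Φ hΦ
    rw [hPtil, mixture_integral (fun e => (P e).prod (P e)) π hπpos (irmF2 E Φ)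
      (hmf2 Φ hΦ) (L' ^ 2) (hgprod Φ hΦ), hR']
    refine Finset.sum_congr rfl (fun e _ => ?_)
    congr 1
    have : ∫ w, irmF2 E Φ (e, w) ∂(P e).prod (P e)
        = (∫ p, 2 * Φ p.1 * (Φ p.1 - p.2) ∂P e) * (∫ p, 2 * Φ p.1 * (Φ p.1 - p.2) ∂P e) := by
      exact integral_prod_mul (μ := P e) (ν := P e)
        (f := fun p : 𝒳 × ℝ => 2 * Φ p.1 * (Φ p.1 - p.2))
        (g := fun p : 𝒳 × ℝ => 2 * Φ p.1 * (Φ p.1 - p.2))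
    rw [this, sq]
  -- events
  set B1 : (𝒳 → ℝ) → Set Ω' := fun Φ =>
    {ω' | (n : ℝ) * (ν / 2) ≤ |∑ i, irmF1 E Φ (D ω' i) - n * R Φ|} with hB1def
  set B2 : (𝒳 → ℝ) → Set Ω' := fun Φ =>
    if n / 2 = 0 then ∅ else {ω' | ((n / 2 : ℕ) : ℝ) * κ ≤ |∑ j, irmF2 E Φ (Dt ω' j) - ((n / 2 : ℕ) : ℝ) * R' Φ|} with hB2def
  -- probability bounds
  have hQB1 : ∀ Φ ∈ H, Q (B1 Φ) ≤ ENNReal.ofReal (δ / (2 * c)) := by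
    intro Φ hΦ
    have hconc := conc Q Pbar D hD (irmF1 E Φ) (hmf1 Φ hΦ) (-L) L (R Φ) (ν / 2)
      (by linarith) (by filter_upwards [hf1bd Φ hΦ] with q hq; exact abs_le.mp hq)
      (hf1mean Φ hΦ) (by linarith)
    refine le_trans hconc (ENNReal.ofReal_le_ofReal ?_)
    have harg : -2 * (n : ℝ) * (ν / 2) ^ 2 / (L - -L) ^ 2 = -((n : ℝ) * ν ^ 2 / (8 * L ^ 2)) := by
      field_simp
      ring
    rw [harg]
    have hexp : Real.exp (-((n : ℝ) * ν ^ 2 / (8 * L ^ 2)))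
        ≤ Real.exp (-Real.log (4 * c / δ)) := by
      apply Real.exp_le_exp.mpr
      rw [neg_le_neg_iff, le_div_iff₀ (by positivity)]
      linarith
    refine le_trans (by linarith : 2 * Real.exp (-((n:ℝ) * ν ^ 2 / (8 * L ^ 2)))
      ≤ 2 * Real.exp (-Real.log (4 * c / δ))) (le_of_eq ?_)
    rw [Real.exp_neg, Real.exp_log (by positivity)]
    field_simp
    ring
  have hQB2 : ∀ Φ ∈ H, Q (B2 Φ) ≤ ENNReal.ofReal (δ / (2 * c)) := by
    intro Φ hΦ
    simp only [hB2def]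
    by_cases hm0 : n / 2 = 0
    · simp only [hm0, if_pos]
      simp
    · rw [if_neg hm0]
      have hm1 : 1 ≤ n / 2 := Nat.one_le_iff_ne_zero.mpr hm0
      have hn2 : 2 ≤ n := by omega
      have hmge : (n : ℝ) ≤ 2 * ((n / 2 : ℕ) : ℝ) + 1 := by
        have h1 : n ≤ 2 * (n / 2) + 1 := by omega
        exact_mod_cast h1
      have hL'2 : (0:ℝ) < L' ^ 2 := by positivity
      have hconc := conc Q Ptil Dt hDt (irmF2 E Φ) (hmf2 Φ hΦ) (-L' ^ 2) (L' ^ 2) (R' Φ) κ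
        (by linarith) (by filter_upwards [hf2bd Φ hΦ] with q hq; exact abs_le.mp hq)
        (hf2mean Φ hΦ) hκpos
      refine le_trans hconc (ENNReal.ofReal_le_ofReal ?_)
      have harg : -2 * ((n / 2 : ℕ) : ℝ) * κ ^ 2 / (L' ^ 2 - -L' ^ 2) ^ 2
          = -(((n / 2 : ℕ) : ℝ) * κ ^ 2 / (2 * L' ^ 4)) := by
        field_simp
        ring
      rw [harg]
      have hm4 : (n : ℝ) ≤ 4 * ((n / 2 : ℕ) : ℝ) := by
        have : (1 : ℝ) ≤ ((n / 2 : ℕ) : ℝ) := by exact_mod_cast hm1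
        linarith
      have hexp : Real.exp (-(((n / 2 : ℕ) : ℝ) * κ ^ 2 / (2 * L' ^ 4)))
          ≤ Real.exp (-Real.log (4 * c / δ)) := by
        apply Real.exp_le_exp.mpr
        rw [neg_le_neg_iff, le_div_iff₀ (by positivity)]
        have t1 : (n : ℝ) * κ ^ 2 ≤ 4 * ((n / 2 : ℕ) : ℝ) * κ ^ 2 := by
          nlinarith [sq_nonneg κ]
        have t2 : 0 ≤ L' ^ 4 * Real.log (4 * c / δ) := by positivity
        nlinarith
      refine le_trans (by linarith : 2 * Real.exp (-(((n / 2 : ℕ) : ℝ) * κ ^ 2 / (2 * L' ^ 4)))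
        ≤ 2 * Real.exp (-Real.log (4 * c / δ))) (le_of_eq ?_)
      rw [Real.exp_neg, Real.exp_log (by positivity)]
      field_simp
      ring
  -- deterministic: if m = 0 then every hypothesis is population-invariant
  have hdet0 : n / 2 = 0 → ∀ Φ ∈ H, R' Φ ≤ ε := by
    intro hm0 Φ hΦ
    by_contra hgt
    push_neg at hgt
    have hIe : ∀ e, |∫ p, 2 * Φ p.1 * (Φ p.1 - p.2) ∂P e| ≤ L' := by
      intro e
      have := norm_integral_le_of_norm_le_const (μ := P e)
        (f := fun p : 𝒳 × ℝ => 2 * Φ p.1 * (Φ p.1 - p.2)) (C := L')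
        (by filter_upwards [hL'bd Φ hΦ e] with p hp; rw [Real.norm_eq_abs]; exact hp)
      simpa using this
    have hRle : R' Φ ≤ L' ^ 2 := by
      rw [hR']
      calc ∑ e, π e * (∫ p, 2 * Φ p.1 * (Φ p.1 - p.2) ∂P e) ^ 2
          ≤ ∑ e, π e * L' ^ 2 := by
            refine Finset.sum_le_sum (fun e _ => ?_)
            refine mul_le_mul_of_nonneg_left ?_ (hπpos e).le
            have h := abs_le.mp (hIe e)
            exact sq_le_sq' h.1 h.2
        _ = L' ^ 2 := by rw [← Finset.sum_mul, hπ1, one_mul]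
    have hκle : κ ≤ R' Φ - ε := by
      have := hκgap Φ hΦ
      rwa [abs_of_pos (by linarith)] at this
    have hn1 : (n : ℝ) ≤ 1 := by
      have : n < 2 := (Nat.div_eq_zero_iff.mp hm0).resolve_left (by norm_num)
      exact_mod_cast Nat.lt_succ_iff.mp this
    have h16 : 16 * L' ^ 4 ≤ κ ^ 2 := by
      nlinarith [hnR', sq_nonneg κ]
    nlinarith [hL'pos, hε, hκpos]
  -- good-event: subset relation
  have hsub : (Set.univ : Set Ω') ⊆ {ω' | ∀ Φhat ∈ H,
        (R'hat Φhat ω' ≤ ε ∧ ∀ Φ ∈ H, R'hat Φ ω' ≤ ε → Rhat Φhat ω' ≤ Rhat Φ ω') →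
        R' Φhat ≤ ε ∧
          ∀ Φstar ∈ H, (R' Φstar ≤ ε ∧ ∀ Φ ∈ H, R' Φ ≤ ε → R Φstar ≤ R Φ) →
            R Φstar ≤ R Φhat ∧ R Φhat ≤ R Φstar + ν} ∪ ⋃ Φ ∈ H, (B1 Φ ∪ B2 Φ) := by
    intro ω _
    by_cases hbad : ω ∈ ⋃ Φ ∈ H, (B1 Φ ∪ B2 Φ)
    · exact Or.inr hbad
    left
    have hnotin : ∀ Φ ∈ H, ω ∉ B1 Φ ∧ ω ∉ B2 Φ := by
      intro Φ hΦ
      constructor <;> intro hmem <;> exact hbad (Set.mem_biUnion hΦ (by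
        first
          | exact Set.mem_union_left _ hmem
          | exact Set.mem_union_right _ hmem))
    have hg1 : ∀ Φ ∈ H, |Rhat Φ ω - R Φ| < ν / 2 := by
      intro Φ hΦ
      have hnot := (hnotin Φ hΦ).1
      rw [hB1def] at hnot
      simp only [Set.mem_setOf_eq, not_le] at hnot
      have hRef : Rhat Φ ω - R Φ = (∑ i, irmF1 E Φ (D ω i) - n * R Φ) / n := by
        rw [hRhat]
        field_simp
        rfl
      rw [hRef, abs_div, abs_of_pos hn0', div_lt_iff₀ hn0']
      calc |∑ i, irmF1 E Φ (D ω i) - ↑n * R Φ| < (n : ℝ) * (ν / 2) := hnot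
        _ = ν / 2 * n := by ring
    have hg2 : ∀ Φ ∈ H, (R'hat Φ ω ≤ ε ↔ R' Φ ≤ ε) := by
      intro Φ hΦ
      by_cases hm0 : n / 2 = 0
      · have h0 : R'hat Φ ω = 0 := by
          rw [hR'hat]
          rw [Nat.cast_eq_zero.mpr hm0, div_zero]
        rw [h0]
        exact iff_of_true hε.le (hdet0 hm0 Φ hΦ)
      · have hnot := (hnotin Φ hΦ).2
        simp only [hB2def] at hnot
        simp only [if_neg hm0, Set.mem_setOf_eq, not_le] at hnot
        have hm0' : 0 < ((n / 2 : ℕ) : ℝ) := by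
          exact_mod_cast Nat.pos_of_ne_zero hm0
        have hRef : R'hat Φ ω - R' Φ
            = (∑ j, irmF2 E Φ (Dt ω j) - ((n / 2 : ℕ) : ℝ) * R' Φ) / ((n / 2 : ℕ) : ℝ) := by
          rw [hR'hat]
          field_simp
          congr 1
          exact Finset.sum_congr rfl (fun j _ => by simp only [irmF2]; ring)
        have hdev : |R'hat Φ ω - R' Φ| < κ := by
          rw [hRef, abs_div, abs_of_pos hm0', div_lt_iff₀ hm0']
          calc |∑ j, irmF2 E Φ (Dt ω j) - ((n / 2 : ℕ) : ℝ) * R' Φ|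
              < ((n / 2 : ℕ) : ℝ) * κ := hnot
            _ = κ * ((n / 2 : ℕ) : ℝ) := by ring
        have hgap := hκgap Φ hΦ
        have habs := abs_lt.mp hdev
        rcases le_or_gt (R' Φ) ε with hle | hgt
        · have : R' Φ ≤ ε - κ := by
            rcases abs_cases (R' Φ - ε) with ⟨he, _⟩ | ⟨he, _⟩ <;> linarith
          exact iff_of_true (by linarith) hle
        · have : ε + κ ≤ R' Φ := by
            rw [abs_of_pos (by linarith)] at hgap
            linarith
          exact iff_of_false (by push_neg; linarith) (by push_neg; linarith)
    -- conclude membership in the good set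
    intro Φhat hΦhat hfm
    obtain ⟨hfeas, hemin⟩ := hfm
    have hpopfeas : R' Φhat ≤ ε := (hg2 Φhat hΦhat).mp hfeas
    refine ⟨hpopfeas, ?_⟩
    intro Φstar hΦstar hsm
    obtain ⟨hsfeas, hsmin⟩ := hsm
    have h1 : Rhat Φhat ω ≤ Rhat Φstar ω := hemin Φstar hΦstar ((hg2 Φstar hΦstar).mpr hsfeas)
    have h2 : R Φstar ≤ R Φhat := hsmin Φhat hΦhat hpopfeas
    refine ⟨h2, ?_⟩
    have ha := abs_lt.mp (hg1 Φhat hΦhat)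
    have hb := abs_lt.mp (hg1 Φstar hΦstar)
    linarith
  -- union bound
  have hQbad : Q (⋃ Φ ∈ H, (B1 Φ ∪ B2 Φ)) ≤ ENNReal.ofReal δ := by
    refine le_trans (measure_biUnion_finset_le H _) ?_
    have hbd : ∀ Φ ∈ H, Q (B1 Φ ∪ B2 Φ) ≤ ENNReal.ofReal (δ / c) := by
      intro Φ hΦ
      refine le_trans (measure_union_le _ _) ?_
      refine le_trans (add_le_add (hQB1 Φ hΦ) (hQB2 Φ hΦ)) ?_
      rw [← ENNReal.ofReal_add (by positivity) (by positivity)]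
      refine ENNReal.ofReal_le_ofReal (le_of_eq ?_)
      field_simp
      ring
    refine le_trans (Finset.sum_le_sum hbd) ?_
    rw [Finset.sum_const, nsmul_eq_mul]
    have hcast : ((H.card : ℕ) : ENNReal) = ENNReal.ofReal c := by
      rw [hc, ENNReal.ofReal_natCast]
    rw [hcast, ← ENNReal.ofReal_mul (by positivity)]
    refine ENNReal.ofReal_le_ofReal (le_of_eq ?_)
    field_simp
  -- conclude
  have h1 : (1 : ENNReal) ≤ Q {ω' | ∀ Φhat ∈ H,
        (R'hat Φhat ω' ≤ ε ∧ ∀ Φ ∈ H, R'hat Φ ω' ≤ ε → Rhat Φhat ω' ≤ Rhat Φ ω') →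
        R' Φhat ≤ ε ∧
          ∀ Φstar ∈ H, (R' Φstar ≤ ε ∧ ∀ Φ ∈ H, R' Φ ≤ ε → R Φstar ≤ R Φ) →
            R Φstar ≤ R Φhat ∧ R Φhat ≤ R Φstar + ν} + ENNReal.ofReal δ := by
    calc (1 : ENNReal) = Q Set.univ := measure_univ.symm
      _ ≤ Q (_ ∪ ⋃ Φ ∈ H, (B1 Φ ∪ B2 Φ)) := measure_mono hsub
      _ ≤ Q _ + Q (⋃ Φ ∈ H, (B1 Φ ∪ B2 Φ)) := measure_union_le _ _
      _ ≤ _ + ENNReal.ofReal δ := add_le_add_right hQbad _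
  have h2 := tsub_le_iff_right.mpr h1
  have h3 : ENNReal.ofReal (1 - δ) ≤ Q {ω' | ∀ Φhat ∈ H,
        (R'hat Φhat ω' ≤ ε ∧ ∀ Φ ∈ H, R'hat Φ ω' ≤ ε → Rhat Φhat ω' ≤ Rhat Φ ω') →
        R' Φhat ≤ ε ∧
          ∀ Φstar ∈ H, (R' Φstar ≤ ε ∧ ∀ Φ ∈ H, R' Φ ≤ ε → R Φstar ≤ R Φ) →
            R Φstar ≤ R Φhat ∧ R Φhat ≤ R Φstar + ν} := by
    refine le_trans (le_of_eq ?_) h2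
    rw [ENNReal.ofReal_sub _ hδ0.le, ENNReal.ofReal_one]
  have h4 := ENNReal.toReal_mono (measure_ne_top Q _) h3
  rwa [ENNReal.toReal_ofReal (by linarith)] at h4
end

section
/- (Proposition 4, EIRM bullet: covariate shift case) Let E_tr be a finite set of environments, π = (π_e) a probability vector with π_e > 0, P_e a probability measure on 𝒳 × ℝ for each e, and H a finite nonempty set of measurable functions Φ : 𝒳 → ℝ with |(Φ(x) − y)²| ≤ L and |2·Φ(x)·(Φ(x) − y)| ≤ L' for all Φ ∈ H and P_e-almost all (x, y). Suppose m ∈ H and that for every e ∈ E_tr, under P_e with coordinates (X, Y), m(X) is a version of the conditional expectation E^e[Y | σ(X)]. Define R(Φ) := Σ_e π_e·E^e[(Y − Φ(X))²]; let R̂ be the empirical risk over n i.i.d. samples from P̄ := Σ_e π_e·(δ_e ⊗ P_e), and let R̂'(Φ) be the empirical mean of g(Φ, X_j, Y_j)·g(Φ, X̃_j, Ỹ_j), g(Φ, x, y) := 2·Φ(x)·(Φ(x) − y), over ⌊n/2⌋ i.i.d. samples from P̃ := Σ_e π_e·(δ_e ⊗ P_e ⊗ P_e). Define κ̃ := min over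 distinct Φ₁ ≠ Φ₂ in H of |R(Φ₁) − R(Φ₂)|. For every ν > 0, ε > 0 and δ ∈ (0,1), if n ≥ max{(8L²/ν²)·log(4|H|/δ), (16L'⁴/ε²)·log(2/δ)}, then with probability at least 1 − δ every minimizer Φ̂ of R̂ over {Φ ∈ H : R̂'(Φ) ≤ ε} satisfies R(m) ≤ R(Φ̂) ≤ R(m) + ν; moreover if in addition ν < κ̃ then Φ̂ = m. -/
open MeasureTheory

section AuxHoeffding

lemma aux_int {β : Type*} [MeasurableSpace β] (μ : Measure β) [IsProbabilityMeasure μ]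
    (f : β → ℝ) (hf : Measurable f) (C : ℝ) (h : ∀ᵐ a ∂μ, |f a| ≤ C) :
    Integrable f μ :=
  Integrable.mono' (integrable_const C) hf.aestronglyMeasurable
    (by simpa [Real.norm_eq_abs] using h)

lemma aux_convex {c t y : ℝ} (hc : 0 < c) (hy : |y| ≤ c) :
    Real.exp (t * y) ≤ Real.cosh (t * c) + (y / c) * Real.sinh (t * c) := by
  have hab : (c + y) / (2 * c) + (c - y) / (2 * c) = 1 := by field_simp; ring
  have ha : 0 ≤ (c + y) / (2 * c) := by
    apply div_nonneg _ (by linarith)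
    have := abs_le.1 hy; linarith
  have hb : 0 ≤ (c - y) / (2 * c) := by
    apply div_nonneg _ (by linarith)
    have := abs_le.1 hy; linarith
  have hpt : (c + y) / (2 * c) * (t * c) + (c - y) / (2 * c) * (-(t * c)) = t * y := by
    field_simp; ring
  have hcvx := convexOn_exp.2 (Set.mem_univ (t * c)) (Set.mem_univ (-(t * c))) ha hb hab
  rw [smul_eq_mul, smul_eq_mul, hpt] at hcvx
  refine hcvx.trans (le_of_eq ?_)
  rw [Real.cosh_eq, Real.sinh_eq]
  field_simp
  ring_nf
  field_simp
  ring

lemma aux_mgf_le {β : Type*} [MeasurableSpace β] (μ : Measure β) [IsProbabilityMeasure μ]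
    (f : β → ℝ) (hf : Measurable f) (c t : ℝ) (hc : 0 < c)
    (hbd : ∀ᵐ a ∂μ, |f a| ≤ c) (hmean : ∫ a, f a ∂μ = 0) :
    ∫ a, Real.exp (t * f a) ∂μ ≤ Real.exp (t ^ 2 * c ^ 2 / 2) := by
  have hfint : Integrable f μ := aux_int μ f hf c hbd
  have hint1 : Integrable (fun a => Real.exp (t * f a)) μ := by
    refine aux_int μ _ (by measurability) (Real.exp (|t| * c)) ?_
    filter_upwards [hbd] with a ha
    rw [abs_of_pos (Real.exp_pos _)]
    apply Real.exp_le_exp.2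
    calc t * f a ≤ |t * f a| := le_abs_self _
      _ = |t| * |f a| := abs_mul _ _
      _ ≤ |t| * c := mul_le_mul_of_nonneg_left ha (abs_nonneg t)
  have hint2 : Integrable (fun a => Real.cosh (t * c) + (f a / c) * Real.sinh (t * c)) μ :=
    (integrable_const _).add ((hfint.div_const c).mul_const _)
  have h1 : ∫ a, Real.exp (t * f a) ∂μ ≤
      ∫ a, (Real.cosh (t * c) + (f a / c) * Real.sinh (t * c)) ∂μ := by
    refine integral_mono_ae hint1 hint2 ?_
    filter_upwards [hbd] with a ha using aux_convex hc ha
  have h2 : ∫ a, (Real.cosh (t * c) + (f a / c) * Real.sinh (t * c)) ∂μ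
      = Real.cosh (t * c) := by
    rw [integral_add (integrable_const _) ((hfint.div_const c).mul_const _),
      integral_const, integral_mul_const, integral_div, hmean]
    simp
  calc ∫ a, Real.exp (t * f a) ∂μ ≤ Real.cosh (t * c) := h1.trans h2.le
    _ ≤ Real.exp ((t * c) ^ 2 / 2) := Real.cosh_le_exp_half_sq _
    _ = Real.exp (t ^ 2 * c ^ 2 / 2) := by rw [mul_pow]

lemma aux_hoeffding {β : Type*} [MeasurableSpace β] (μ : Measure β) [IsProbabilityMeasure μ]
    (k : ℕ) (f : β → ℝ) (hf : Measurable f) (c s : ℝ)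
    (hc : 0 < c) (hs : 0 < s) (hmean : ∫ a, f a ∂μ = 0) (hbd : ∀ᵐ a ∂μ, |f a| ≤ c) :
    Measure.pi (fun _ : Fin k => μ) {x | s ≤ ∑ i, f (x i)} ≤
      ENNReal.ofReal (Real.exp (-(s ^ 2) / (2 * k * c ^ 2))) := by
  rcases Nat.eq_zero_or_pos k with hk | hk
  · subst hk
    have h0 : {x : Fin 0 → β | s ≤ ∑ i, f (x i)} = ∅ := by
      ext x; simp [hs.not_ge]
    rw [h0]
    simp
  have hkR : (0:ℝ) < (k:ℝ) := Nat.cast_pos.2 hk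
  letI : MeasureSpace β := ⟨μ⟩
  have hvol : (volume : Measure (Fin k → β)) = Measure.pi (fun _ : Fin k => μ) := rfl
  haveI : IsProbabilityMeasure (volume : Measure β) := ‹IsProbabilityMeasure μ›
  set t : ℝ := s / (k * c ^ 2) with ht_def
  have ht : 0 < t := div_pos hs (by positivity)
  set X : (Fin k → β) → ℝ := fun x => ∑ i, f (x i) with hX_def
  have hXm : Measurable X := Finset.measurable_sum _ fun i _ => hf.comp (measurable_pi_apply i)
  have hexp_i : Integrable (fun a => Real.exp (t * f a)) μ := by
    refine aux_int μ _ (by measurability) (Real.exp (|t| * c)) ?_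
    filter_upwards [hbd] with a ha
    rw [abs_of_pos (Real.exp_pos _)]
    apply Real.exp_le_exp.2
    calc t * f a ≤ |t * f a| := le_abs_self _
      _ = |t| * |f a| := abs_mul _ _
      _ ≤ |t| * c := mul_le_mul_of_nonneg_left ha (abs_nonneg t)
  have hprod_eq : (fun x : Fin k → β => Real.exp (t * X x))
      = fun x : Fin k → β => ∏ i, Real.exp (t * f (x i)) := by
    funext x
    rw [hX_def, Finset.mul_sum, Real.exp_sum]
  have h_int : Integrable (fun x : Fin k → β => Real.exp (t * X x))
      (Measure.pi (fun _ : Fin k => μ)) := by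
    rw [hprod_eq, ← hvol]
    exact Integrable.fintype_prod (f := fun _ : Fin k => fun a => Real.exp (t * f a))
      (fun i => hexp_i)
  have hmgf : ProbabilityTheory.mgf X (Measure.pi (fun _ : Fin k => μ)) t
      = (∫ a, Real.exp (t * f a) ∂μ) ^ k := by
    rw [ProbabilityTheory.mgf]
    rw [hprod_eq, ← hvol]
    simpa [hvol] using integral_fintype_prod_eq_pow (ι := Fin k) (μ := μ) (fun a => Real.exp (t * f a))
  have hcher := ProbabilityTheory.measure_ge_le_exp_mul_mgf (X := X)
    (μ := Measure.pi (fun _ : Fin k => μ)) s ht.le h_int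
  rw [hmgf] at hcher
  have hM0 : 0 ≤ ∫ a, Real.exp (t * f a) ∂μ :=
    integral_nonneg fun a => (Real.exp_pos _).le
  have hMle : (∫ a, Real.exp (t * f a) ∂μ) ^ k ≤ Real.exp (t ^ 2 * c ^ 2 / 2) ^ k :=
    pow_le_pow_left₀ hM0 (aux_mgf_le μ f hf c t hc hbd hmean) k
  have hfinal : Real.exp (-t * s) * Real.exp (t ^ 2 * c ^ 2 / 2) ^ k
      = Real.exp (-(s ^ 2) / (2 * k * c ^ 2)) := by
    rw [← Real.exp_nat_mul, ← Real.exp_add]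
    congr 1
    rw [ht_def]
    field_simp
    ring
  have hle : (Measure.pi (fun _ : Fin k => μ) {x | s ≤ X x}).toReal
      ≤ Real.exp (-(s ^ 2) / (2 * k * c ^ 2)) := by
    calc (Measure.pi (fun _ : Fin k => μ) {x | s ≤ X x}).toReal
        ≤ Real.exp (-t * s) * (∫ a, Real.exp (t * f a) ∂μ) ^ k := hcher
      _ ≤ Real.exp (-t * s) * Real.exp (t ^ 2 * c ^ 2 / 2) ^ k :=
          mul_le_mul_of_nonneg_left hMle (Real.exp_pos _).le
      _ = _ := hfinal
  calc Measure.pi (fun _ : Fin k => μ) {x | s ≤ ∑ i, f (x i)}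
      = ENNReal.ofReal ((Measure.pi (fun _ : Fin k => μ) {x | s ≤ X x}).toReal) := by
        rw [ENNReal.ofReal_toReal (measure_ne_top _ _)]
    _ ≤ ENNReal.ofReal (Real.exp (-(s ^ 2) / (2 * k * c ^ 2))) := ENNReal.ofReal_le_ofReal hle

end AuxHoeffding

section AuxMix

variable {E β : Type*} [Fintype E] [MeasurableSpace E] [MeasurableSpace β]

lemma aux_ae_bar (π : E → ℝ) (P : E → Measure β) [∀ e, IsProbabilityMeasure (P e)]
    (S : Set β) (h : ∀ e, ∀ᵐ p ∂P e, p ∈ S) :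
    ∀ᵐ q ∂(∑ e, ENNReal.ofReal (π e) • (Measure.dirac e).prod (P e)), q.2 ∈ S := by
  rw [ae_iff]
  have hset : {q : E × β | ¬ q.2 ∈ S} = Set.univ ×ˢ Sᶜ := by
    ext q; simp [Set.mem_prod]
  rw [hset]
  have hz : ∀ e, ((Measure.dirac e).prod (P e)) (Set.univ ×ˢ Sᶜ) = 0 := by
    intro e
    rw [Measure.prod_prod]
    have h2 := h e
    rw [ae_iff] at h2
    simp only [Set.compl_def, h2, mul_zero]
  simp only [Measure.coe_finset_sum, Finset.sum_apply, Measure.smul_apply, hz,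
    smul_eq_mul, mul_zero, Finset.sum_const_zero]

lemma aux_integral_bar (π : E → ℝ) (hπ : ∀ e, 0 ≤ π e) (P : E → Measure β)
    [∀ e, IsProbabilityMeasure (P e)]
    (g : E × β → ℝ) (hg : Measurable g) (C : ℝ) (hbd : ∀ e, ∀ᵐ p ∂P e, |g (e, p)| ≤ C) :
    ∫ q, g q ∂(∑ e, ENNReal.ofReal (π e) • (Measure.dirac e).prod (P e))
    = ∑ e, π e * ∫ p, g (e, p) ∂P e := by
  have hint_e : ∀ e, Integrable (fun p => g (e, p)) (P e) := fun e =>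
    Integrable.mono' (integrable_const C) ((hg.comp measurable_prodMk_left).aestronglyMeasurable)
      (by simpa [Real.norm_eq_abs] using hbd e)
  have hint_map : ∀ e, Integrable g ((Measure.dirac e).prod (P e)) := by
    intro e
    rw [Measure.dirac_prod]
    exact (integrable_map_measure hg.aestronglyMeasurable
      measurable_prodMk_left.aemeasurable).2 (hint_e e)
  have hint : ∀ e, Integrable g (ENNReal.ofReal (π e) • (Measure.dirac e).prod (P e)) :=
    fun e => (hint_map e).smul_measure ENNReal.ofReal_ne_top
  rw [integral_finset_sum_measure (fun e _ => hint e)]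
  refine Finset.sum_congr rfl fun e _ => ?_
  rw [integral_smul_measure, ENNReal.toReal_ofReal (hπ e), Measure.dirac_prod,
    integral_map measurable_prodMk_left.aemeasurable hg.aestronglyMeasurable]
  rfl

lemma aux_ae_prod_fst (μ ν : Measure β) [IsProbabilityMeasure μ] [IsProbabilityMeasure ν]
    (S : Set β) (h : ∀ᵐ p ∂μ, p ∈ S) : ∀ᵐ z ∂μ.prod ν, z.1 ∈ S := by
  rw [ae_iff]
  have hset : {z : β × β | ¬ z.1 ∈ S} = Sᶜ ×ˢ Set.univ := by ext z; simp [Set.mem_prod]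
  rw [hset, Measure.prod_prod]
  rw [ae_iff] at h
  simp only [Set.compl_def, h, zero_mul, measure_univ, mul_one]

lemma aux_ae_prod_snd (μ ν : Measure β) [IsProbabilityMeasure μ] [IsProbabilityMeasure ν]
    (S : Set β) (h : ∀ᵐ p ∂ν, p ∈ S) : ∀ᵐ z ∂μ.prod ν, z.2 ∈ S := by
  rw [ae_iff]
  have hset : {z : β × β | ¬ z.2 ∈ S} = Set.univ ×ˢ Sᶜ := by ext z; simp [Set.mem_prod]
  rw [hset, Measure.prod_prod]
  rw [ae_iff] at h
  simp only [Set.compl_def, h, mul_zero, measure_univ, one_mul]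

end AuxMix

lemma aux_cross {𝒳 : Type*} [MeasurableSpace 𝒳] (μ : Measure (𝒳 × ℝ))
    [IsProbabilityMeasure μ] (m : 𝒳 → ℝ) (hm : Measurable m) (L : ℝ)
    (hbm : ∀ᵐ p ∂μ, |(m p.1 - p.2) ^ 2| ≤ L)
    (hcond : μ[fun p => p.2|MeasurableSpace.comap Prod.fst inferInstance] =ᵐ[μ]
      fun p => m p.1)
    (F : 𝒳 → ℝ) (hF : Measurable F) (C : ℝ)
    (hbF : ∀ᵐ p ∂μ, |F p.1 * (p.2 - m p.1)| ≤ C) :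
    ∫ p, F p.1 * (p.2 - m p.1) ∂μ = 0 := by
  have hle : (MeasurableSpace.comap (Prod.fst : 𝒳 × ℝ → 𝒳) inferInstance) ≤
      Prod.instMeasurableSpace := measurable_fst.comap_le
  haveI : SigmaFinite (μ.trim hle) := inferInstance
  have hbG : ∀ᵐ p ∂μ, |p.2 - m p.1| ≤ Real.sqrt L := by
    filter_upwards [hbm] with p hp
    have h2 : (p.2 - m p.1) ^ 2 ≤ L := by
      rw [abs_of_nonneg (sq_nonneg _)] at hp
      calc (p.2 - m p.1) ^ 2 = (m p.1 - p.2) ^ 2 := by ring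
        _ ≤ L := hp
    calc |p.2 - m p.1| = Real.sqrt ((p.2 - m p.1) ^ 2) := (Real.sqrt_sq_eq_abs _).symm
      _ ≤ Real.sqrt L := Real.sqrt_le_sqrt h2
  have hGmeas : Measurable (fun p : 𝒳 × ℝ => p.2 - m p.1) :=
    measurable_snd.sub (hm.comp measurable_fst)
  have hGint : Integrable (fun p : 𝒳 × ℝ => p.2 - m p.1) μ :=
    aux_int μ _ hGmeas (Real.sqrt L) hbG
  have hfst : Measurable[MeasurableSpace.comap Prod.fst inferInstance]
      (Prod.fst : 𝒳 × ℝ → 𝒳) := fun s hs => ⟨s, hs, rfl⟩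
  have hmX_meas : StronglyMeasurable[MeasurableSpace.comap Prod.fst inferInstance]
      (fun p : 𝒳 × ℝ => m p.1) := (hm.comp hfst).stronglyMeasurable
  have hYint : Integrable (fun p : 𝒳 × ℝ => p.2) μ := by
    by_contra hni
    have h0 : μ[fun p : 𝒳 × ℝ => p.2|MeasurableSpace.comap Prod.fst inferInstance] = 0 :=
      condExp_of_not_integrable hni
    have hm0 : (fun p : 𝒳 × ℝ => m p.1) =ᵐ[μ] 0 := by
      filter_upwards [hcond] with p hp
      rw [← hp, h0]
    refine hni (aux_int μ _ measurable_snd (Real.sqrt L) ?_)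
    filter_upwards [hbG, hm0] with p hp h0p
    have hz : m p.1 = 0 := h0p
    calc |p.2| = |p.2 - m p.1| := by rw [hz, sub_zero]
      _ ≤ Real.sqrt L := hp
  have hmXint : Integrable (fun p : 𝒳 × ℝ => m p.1) μ := by
    have heq : (fun p : 𝒳 × ℝ => m p.1)
        = (fun p : 𝒳 × ℝ => p.2) - fun p : 𝒳 × ℝ => p.2 - m p.1 := by
      funext p; simp
    rw [heq]
    exact hYint.sub hGint
  have hcond0 : μ[fun p : 𝒳 × ℝ => p.2 - m p.1|MeasurableSpace.comap Prod.fst inferInstance]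
      =ᵐ[μ] 0 := by
    have h1 : μ[(fun p : 𝒳 × ℝ => p.2) - fun p : 𝒳 × ℝ => m p.1|
          MeasurableSpace.comap Prod.fst inferInstance] =ᵐ[μ]
        μ[fun p : 𝒳 × ℝ => p.2|MeasurableSpace.comap Prod.fst inferInstance]
        - μ[fun p : 𝒳 × ℝ => m p.1|MeasurableSpace.comap Prod.fst inferInstance] :=
      condExp_sub hYint hmXint _
    have h2 : μ[fun p : 𝒳 × ℝ => m p.1|MeasurableSpace.comap Prod.fst inferInstance]
        = fun p : 𝒳 × ℝ => m p.1 := condExp_of_stronglyMeasurable hle hmX_meas hmXint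
    have heq : (fun p : 𝒳 × ℝ => p.2 - m p.1)
        = (fun p : 𝒳 × ℝ => p.2) - fun p : 𝒳 × ℝ => m p.1 := by funext p; simp [Pi.sub_apply]
    rw [heq]
    filter_upwards [h1, hcond] with p hp hcp
    rw [hp]
    simp only [Pi.sub_apply, h2, hcp, Pi.zero_apply, sub_self]
  have hFf_meas : StronglyMeasurable[MeasurableSpace.comap Prod.fst inferInstance]
      (fun p : 𝒳 × ℝ => F p.1) := (hF.comp hfst).stronglyMeasurable
  have hFGint : Integrable ((fun p : 𝒳 × ℝ => F p.1) * fun p : 𝒳 × ℝ => p.2 - m p.1) μ := by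
    refine aux_int μ _ ((hF.comp measurable_fst).mul hGmeas) C ?_
    exact hbF
  have hkey : μ[(fun p : 𝒳 × ℝ => F p.1) * (fun p : 𝒳 × ℝ => p.2 - m p.1)|
        MeasurableSpace.comap Prod.fst inferInstance] =ᵐ[μ]
      (fun p : 𝒳 × ℝ => F p.1) *
        μ[fun p : 𝒳 × ℝ => p.2 - m p.1|MeasurableSpace.comap Prod.fst inferInstance] :=
    condExp_mul_of_stronglyMeasurable_left hFf_meas hFGint hGint
  have hzero : ∫ p, ((fun p : 𝒳 × ℝ => F p.1) * fun p : 𝒳 × ℝ => p.2 - m p.1) p ∂μ = 0 := by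
    rw [← integral_condExp (f := (fun p : 𝒳 × ℝ => F p.1) * fun p : 𝒳 × ℝ => p.2 - m p.1) hle]
    have hae : μ[(fun p : 𝒳 × ℝ => F p.1) * (fun p : 𝒳 × ℝ => p.2 - m p.1)|
        MeasurableSpace.comap Prod.fst inferInstance] =ᵐ[μ] 0 := by
      filter_upwards [hkey, hcond0] with p hp hp0
      rw [hp]
      simp only [Pi.mul_apply, hp0, Pi.zero_apply, mul_zero]
    rw [integral_congr_ae hae]
    simp
  simpa using hzero
set_option maxHeartbeats 4000000 in
/-- (Proposition 4, EIRM bullet, covariate shift case.) If the conditional expectation of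
`Y` given `X` is the same function `m ∈ H` in every training environment, then with
`n ≥ max{(8L²/ν²)·log(4|H|/δ), (16L'⁴/ε²)·log(2/δ)}` samples, with probability at least
`1 − δ` every minimizer `Φ̂` of the empirical risk over the empirical `ε`-invariant set
satisfies `R(m) ≤ R(Φ̂) ≤ R(m) + ν`, and moreover `Φ̂ = m` whenever `ν < κ̃`. -/
theorem stmt9 {E 𝒳 : Type*} [Fintype E] [Nonempty E]
    [MeasurableSpace E] [MeasurableSingletonClass E] [MeasurableSpace 𝒳]
    (π : E → ℝ) (hπ : ∀ e, 0 < π e) (hπ1 : ∑ e, π e = 1)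
    (P : E → Measure (𝒳 × ℝ)) [∀ e, IsProbabilityMeasure (P e)]
    (H : Finset (𝒳 → ℝ)) (hHne : H.Nonempty) (hHmeas : ∀ Φ ∈ H, Measurable Φ)
    (L L' : ℝ) (hL : 0 < L) (hL'pos : 0 < L')
    (hLbd : ∀ Φ ∈ H, ∀ e, ∀ᵐ p ∂P e, |(Φ p.1 - p.2) ^ 2| ≤ L)
    (hL'bd : ∀ Φ ∈ H, ∀ e, ∀ᵐ p ∂P e, |2 * Φ p.1 * (Φ p.1 - p.2)| ≤ L')
    (m : 𝒳 → ℝ) (hmH : m ∈ H)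
    (hcond : ∀ e, (P e)[fun p => p.2|MeasurableSpace.comap Prod.fst inferInstance]
      =ᵐ[P e] fun p => m p.1)
    (R : (𝒳 → ℝ) → ℝ)
    (hR : ∀ Φ, R Φ = ∑ e, π e * ∫ p, (p.2 - Φ p.1) ^ 2 ∂P e)
    (κt : ℝ)
    (hκt : κt = ⨅ pr : {pr : (𝒳 → ℝ) × (𝒳 → ℝ) // pr.1 ∈ H ∧ pr.2 ∈ H ∧ pr.1 ≠ pr.2},
      |R pr.val.1 - R pr.val.2|)
    (ν ε δ : ℝ) (hν : 0 < ν) (hε : 0 < ε) (hδ : δ ∈ Set.Ioo (0 : ℝ) 1)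
    (Pbar : Measure (E × 𝒳 × ℝ)) [IsProbabilityMeasure Pbar]
    (hPbar : Pbar = ∑ e, ENNReal.ofReal (π e) • (Measure.dirac e).prod (P e))
    (Ptil : Measure (E × ((𝒳 × ℝ) × (𝒳 × ℝ)))) [IsProbabilityMeasure Ptil]
    (hPtil : Ptil = ∑ e, ENNReal.ofReal (π e) • (Measure.dirac e).prod ((P e).prod (P e)))
    (n : ℕ)
    (hn : max (8 * L ^ 2 / ν ^ 2 * Real.log (4 * (H.card : ℝ) / δ))
        (16 * L' ^ 4 / ε ^ 2 * Real.log (2 / δ)) ≤ (n : ℝ))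
    (Ω' : Type*) [MeasurableSpace Ω'] (Q : Measure Ω') [IsProbabilityMeasure Q]
    (D : Ω' → Fin n → E × 𝒳 × ℝ)
    (Dt : Ω' → Fin (n / 2) → E × ((𝒳 × ℝ) × (𝒳 × ℝ)))
    (hD : Measure.map D Q = Measure.pi fun _ => Pbar)
    (hDt : Measure.map Dt Q = Measure.pi fun _ => Ptil)
    (Rhat : (𝒳 → ℝ) → Ω' → ℝ)
    (hRhat : ∀ Φ ω', Rhat Φ ω' = (∑ i, ((D ω' i).2.2 - Φ (D ω' i).2.1) ^ 2) / (n : ℝ))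
    (R'hat : (𝒳 → ℝ) → Ω' → ℝ)
    (hR'hat : ∀ Φ ω', R'hat Φ ω' = (∑ j,
        (2 * Φ (Dt ω' j).2.1.1 * (Φ (Dt ω' j).2.1.1 - (Dt ω' j).2.1.2)) *
        (2 * Φ (Dt ω' j).2.2.1 * (Φ (Dt ω' j).2.2.1 - (Dt ω' j).2.2.2)))
      / ((n / 2 : ℕ) : ℝ)) :
    1 - δ ≤ (Q {ω' | ∀ Φhat ∈ H,
        (R'hat Φhat ω' ≤ ε ∧ ∀ Φ ∈ H, R'hat Φ ω' ≤ ε → Rhat Φhat ω' ≤ Rhat Φ ω') →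
        (R m ≤ R Φhat ∧ R Φhat ≤ R m + ν) ∧ (ν < κt → Φhat = m)}).toReal := by
  obtain ⟨hδ0, hδ1⟩ := hδ
  have hcard1 : 1 ≤ (H.card : ℝ) := by
    exact_mod_cast Nat.one_le_iff_ne_zero.2 (Finset.card_ne_zero_of_mem hmH)
  -- n is positive
  have hlog1 : 0 < Real.log (4 * (H.card : ℝ) / δ) := by
    apply Real.log_pos
    rw [lt_div_iff₀ hδ0]
    nlinarith
  have hn1 : 8 * L ^ 2 / ν ^ 2 * Real.log (4 * (H.card : ℝ) / δ) ≤ (n : ℝ) :=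
    le_trans (le_max_left _ _) hn
  have hn2 : 16 * L' ^ 4 / ε ^ 2 * Real.log (2 / δ) ≤ (n : ℝ) := le_trans (le_max_right _ _) hn
  have hnR : (0 : ℝ) < (n : ℝ) := lt_of_lt_of_le (by positivity) hn1
  have hn0 : (n : ℝ) ≠ 0 := hnR.ne'
  -- measurability of hypotheses' functions
  set F : (𝒳 → ℝ) → (E × 𝒳 × ℝ) → ℝ := fun Φ q => (q.2.2 - Φ q.2.1) ^ 2 with hF_def
  have hFmeas : ∀ Φ ∈ H, Measurable (F Φ) := fun Φ hΦ =>
    ((measurable_snd.comp measurable_snd).sub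
      ((hHmeas Φ hΦ).comp (measurable_fst.comp measurable_snd))).pow_const 2
  -- a.e. bounds under Pbar
  have haeF : ∀ Φ ∈ H, ∀ᵐ q ∂Pbar, F Φ q ≤ L := by
    intro Φ hΦ
    rw [hPbar]
    have key := aux_ae_bar π P {p : 𝒳 × ℝ | (p.2 - Φ p.1) ^ 2 ≤ L} (fun e => by
      filter_upwards [hLbd Φ hΦ e] with p hp
      rw [abs_of_nonneg (sq_nonneg _)] at hp
      show (p.2 - Φ p.1) ^ 2 ≤ L
      rw [show (p.2 - Φ p.1) ^ 2 = (Φ p.1 - p.2) ^ 2 from by ring]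
      exact hp)
    filter_upwards [key] with q hq
    exact hq
  have haeFabs : ∀ Φ ∈ H, ∀ᵐ q ∂Pbar, |F Φ q| ≤ L := by
    intro Φ hΦ
    filter_upwards [haeF Φ hΦ] with q hq
    rwa [abs_of_nonneg (sq_nonneg _)]
  have hFint : ∀ Φ ∈ H, Integrable (F Φ) Pbar := fun Φ hΦ =>
    aux_int Pbar _ (hFmeas Φ hΦ) L (haeFabs Φ hΦ)
  -- mean of F Φ is R Φ
  have hFmean : ∀ Φ ∈ H, ∫ q, F Φ q ∂Pbar = R Φ := by
    intro Φ hΦ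
    rw [hPbar, hR]
    refine (aux_integral_bar π (fun e => (hπ e).le) P _ (hFmeas Φ hΦ) L ?_).trans ?_
    · intro e
      filter_upwards [hLbd Φ hΦ e] with p hp
      show |(p.2 - Φ p.1) ^ 2| ≤ L
      rw [show (p.2 - Φ p.1) ^ 2 = (Φ p.1 - p.2) ^ 2 from by ring]
      exact hp
    · rfl
  -- R Φ ∈ [0, L]
  have hR0 : ∀ Φ ∈ H, 0 ≤ R Φ := by
    intro Φ hΦ
    rw [← hFmean Φ hΦ]
    exact integral_nonneg fun q => sq_nonneg _
  have hRL : ∀ Φ ∈ H, R Φ ≤ L := by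
    intro Φ hΦ
    rw [← hFmean Φ hΦ]
    calc ∫ q, F Φ q ∂Pbar ≤ ∫ _q, L ∂Pbar :=
        integral_mono_ae (hFint Φ hΦ) (integrable_const L) (haeF Φ hΦ)
      _ = L := by simp

  -- pointwise bound |y - m x| ≤ √L a.e. each environment
  have hbGe : ∀ e, ∀ᵐ p ∂P e, |p.2 - m p.1| ≤ Real.sqrt L := by
    intro e
    filter_upwards [hLbd m hmH e] with p hp
    rw [abs_of_nonneg (sq_nonneg _)] at hp
    have h2 : (p.2 - m p.1) ^ 2 ≤ L := by
      rw [show (p.2 - m p.1) ^ 2 = (m p.1 - p.2) ^ 2 from by ring]; exact hp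
    calc |p.2 - m p.1| = Real.sqrt ((p.2 - m p.1) ^ 2) := (Real.sqrt_sq_eq_abs _).symm
      _ ≤ Real.sqrt L := Real.sqrt_le_sqrt h2
  have hsqrtL : Real.sqrt L * Real.sqrt L = L := Real.mul_self_sqrt hL.le
  -- cross term zero: ∫ gm dP e = 0 where gm p = 2 m(x) (m(x) - y)
  set gm : 𝒳 × ℝ → ℝ := fun p => 2 * m p.1 * (m p.1 - p.2) with hgm_def
  have hmm : Measurable m := hHmeas m hmH
  have hgm_meas : Measurable gm :=
    ((hmm.comp measurable_fst).const_mul 2).mul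
      ((hmm.comp measurable_fst).sub measurable_snd)
  have hgm_zero : ∀ e, ∫ p, gm p ∂P e = 0 := by
    intro e
    have hcr := aux_cross (P e) m hmm L (hLbd m hmH e) (hcond e)
      (fun x => 2 * m x) (hmm.const_mul 2) L' (by
        filter_upwards [hL'bd m hmH e] with p hp
        rw [show 2 * m p.1 * (p.2 - m p.1) = -(2 * m p.1 * (m p.1 - p.2)) from by ring,
          abs_neg]
        exact hp)
    have : ∫ p, gm p ∂P e = - ∫ p, (2 * m p.1) * (p.2 - m p.1) ∂P e := by
      rw [← integral_neg]
      refine integral_congr_ae (Filter.Eventually.of_forall fun p => ?_)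
      simp only [hgm_def]; ring
    rw [this, hcr, neg_zero]
  -- R m ≤ R Φ for all Φ ∈ H
  have hRm_le : ∀ Φ ∈ H, R m ≤ R Φ := by
    intro Φ hΦ
    rw [hR, hR]
    refine Finset.sum_le_sum fun e _ => mul_le_mul_of_nonneg_left ?_ (hπ e).le
    -- per-environment bias-variance
    have hbGΦ : ∀ᵐ p ∂P e, |p.2 - Φ p.1| ≤ Real.sqrt L := by
      filter_upwards [hLbd Φ hΦ e] with p hp
      rw [abs_of_nonneg (sq_nonneg _)] at hp
      have h2 : (p.2 - Φ p.1) ^ 2 ≤ L := by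
        rw [show (p.2 - Φ p.1) ^ 2 = (Φ p.1 - p.2) ^ 2 from by ring]; exact hp
      calc |p.2 - Φ p.1| = Real.sqrt ((p.2 - Φ p.1) ^ 2) := (Real.sqrt_sq_eq_abs _).symm
        _ ≤ Real.sqrt L := Real.sqrt_le_sqrt h2
    have hbdiff : ∀ᵐ p ∂P e, |m p.1 - Φ p.1| ≤ 2 * Real.sqrt L := by
      filter_upwards [hbGe e, hbGΦ] with p h1 h2
      calc |m p.1 - Φ p.1| = |(p.2 - Φ p.1) - (p.2 - m p.1)| := by ring_nf
        _ ≤ |p.2 - Φ p.1| + |p.2 - m p.1| := abs_sub _ _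
        _ ≤ 2 * Real.sqrt L := by linarith
    have hcross := aux_cross (P e) m hmm L (hLbd m hmH e) (hcond e)
      (fun x => 2 * (m x - Φ x)) (((hmm.sub (hHmeas Φ hΦ)).const_mul 2)) (4 * L) (by
        filter_upwards [hbdiff, hbGe e] with p h1 h2
        calc |2 * (m p.1 - Φ p.1) * (p.2 - m p.1)|
            = 2 * (|m p.1 - Φ p.1| * |p.2 - m p.1|) := by
              rw [abs_mul, abs_mul]; simp [abs_of_nonneg]; ring
          _ ≤ 2 * ((2 * Real.sqrt L) * Real.sqrt L) := by
              refine mul_le_mul_of_nonneg_left ?_ (by norm_num)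
              exact mul_le_mul h1 h2 (abs_nonneg _) (by positivity)
          _ = 4 * L := by rw [mul_assoc, hsqrtL]; ring
        )
    -- integrability of the three pieces
    have hint1 : Integrable (fun p : 𝒳 × ℝ => (p.2 - m p.1) ^ 2) (P e) := by
      refine aux_int (P e) _ ((measurable_snd.sub (hmm.comp measurable_fst)).pow_const 2) L ?_
      filter_upwards [hLbd m hmH e] with p hp
      rw [show (p.2 - m p.1) ^ 2 = (m p.1 - p.2) ^ 2 from by ring, abs_of_nonneg (sq_nonneg _),
        ← abs_of_nonneg (sq_nonneg ((m p.1 - p.2)))]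
      exact hp
    have hint2 : Integrable (fun p : 𝒳 × ℝ => (m p.1 - Φ p.1) ^ 2) (P e) := by
      refine aux_int (P e) _ (((hmm.sub (hHmeas Φ hΦ)).comp measurable_fst).pow_const 2)
        (4 * L) ?_
      filter_upwards [hbdiff] with p hp
      rw [abs_of_nonneg (sq_nonneg _)]
      calc (m p.1 - Φ p.1) ^ 2 = |m p.1 - Φ p.1| * |m p.1 - Φ p.1| := by
            rw [← abs_mul, abs_of_nonneg (by nlinarith [sq_nonneg (m p.1 - Φ p.1)] : 
              (0:ℝ) ≤ (m p.1 - Φ p.1) * (m p.1 - Φ p.1))]; ring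
        _ ≤ (2 * Real.sqrt L) * (2 * Real.sqrt L) :=
            mul_le_mul hp hp (abs_nonneg _) (by positivity)
        _ = 4 * L := by rw [show (2 * Real.sqrt L) * (2 * Real.sqrt L)
              = 4 * (Real.sqrt L * Real.sqrt L) from by ring, hsqrtL]
    have hint3 : Integrable (fun p : 𝒳 × ℝ => 2 * (m p.1 - Φ p.1) * (p.2 - m p.1)) (P e) := by
      refine aux_int (P e) _ ((((hmm.sub (hHmeas Φ hΦ)).comp measurable_fst).const_mul 2).mul
        (measurable_snd.sub (hmm.comp measurable_fst))) (4 * L) ?_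
      filter_upwards [hbdiff, hbGe e] with p h1 h2
      calc |2 * (m p.1 - Φ p.1) * (p.2 - m p.1)|
          = 2 * (|m p.1 - Φ p.1| * |p.2 - m p.1|) := by
            rw [abs_mul, abs_mul]; simp [abs_of_nonneg]; ring
        _ ≤ 2 * ((2 * Real.sqrt L) * Real.sqrt L) := by
            refine mul_le_mul_of_nonneg_left ?_ (by norm_num)
            exact mul_le_mul h1 h2 (abs_nonneg _) (by positivity)
        _ = 4 * L := by rw [mul_assoc, hsqrtL]; ring
    have hdecomp : ∫ p, (p.2 - Φ p.1) ^ 2 ∂P e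
        = (∫ p, (p.2 - m p.1) ^ 2 ∂P e) + (∫ p, (m p.1 - Φ p.1) ^ 2 ∂P e)
          + ∫ p, 2 * (m p.1 - Φ p.1) * (p.2 - m p.1) ∂P e := by
      calc ∫ p, (p.2 - Φ p.1) ^ 2 ∂P e
          = ∫ p, (((p.2 - m p.1) ^ 2 + (m p.1 - Φ p.1) ^ 2)
              + 2 * (m p.1 - Φ p.1) * (p.2 - m p.1)) ∂P e :=
            integral_congr_ae (Filter.Eventually.of_forall fun p => by ring)
        _ = (∫ p, ((p.2 - m p.1) ^ 2 + (m p.1 - Φ p.1) ^ 2) ∂P e)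
              + ∫ p, 2 * (m p.1 - Φ p.1) * (p.2 - m p.1) ∂P e :=
            integral_add (f := fun p : 𝒳 × ℝ => (p.2 - m p.1) ^ 2 + (m p.1 - Φ p.1) ^ 2)
              (g := fun p : 𝒳 × ℝ => 2 * (m p.1 - Φ p.1) * (p.2 - m p.1))
              (hint1.add hint2) hint3
        _ = _ := by
            rw [integral_add (f := fun p : 𝒳 × ℝ => (p.2 - m p.1) ^ 2)
              (g := fun p : 𝒳 × ℝ => (m p.1 - Φ p.1) ^ 2) hint1 hint2]
    rw [hdecomp, hcross]
    have h2nonneg : 0 ≤ ∫ p, (m p.1 - Φ p.1) ^ 2 ∂P e := integral_nonneg fun p => sq_nonneg _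
    linarith

  -- the pair function for the invariance penalty
  set gg : E × ((𝒳 × ℝ) × (𝒳 × ℝ)) → ℝ := fun q => gm q.2.1 * gm q.2.2 with hgg_def
  have hgg_meas : Measurable gg :=
    (hgm_meas.comp (measurable_fst.comp measurable_snd)).mul
      (hgm_meas.comp (measurable_snd.comp measurable_snd))
  have haegm : ∀ e, ∀ᵐ p ∂P e, |gm p| ≤ L' := by
    intro e
    filter_upwards [hL'bd m hmH e] with p hp
    exact hp
  have haegg_e : ∀ e, ∀ᵐ z ∂(P e).prod (P e), |gm z.1 * gm z.2| ≤ L' ^ 2 := by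
    intro e
    have h1 := aux_ae_prod_fst (P e) (P e) {p | |gm p| ≤ L'} (haegm e)
    have h2 := aux_ae_prod_snd (P e) (P e) {p | |gm p| ≤ L'} (haegm e)
    filter_upwards [h1, h2] with z hz1 hz2
    calc |gm z.1 * gm z.2| = |gm z.1| * |gm z.2| := abs_mul _ _
      _ ≤ L' * L' := mul_le_mul hz1 hz2 (abs_nonneg _) hL'pos.le
      _ = L' ^ 2 := (sq L').symm
  have haegg : ∀ᵐ q ∂Ptil, |gg q| ≤ L' ^ 2 := by
    rw [hPtil]
    have key := aux_ae_bar π (fun e => (P e).prod (P e))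
      {z : (𝒳 × ℝ) × (𝒳 × ℝ) | |gm z.1 * gm z.2| ≤ L' ^ 2} haegg_e
    filter_upwards [key] with q hq
    exact hq
  have hggmean : ∫ q, gg q ∂Ptil = 0 := by
    rw [hPtil]
    rw [aux_integral_bar π (fun e => (hπ e).le) (fun e => (P e).prod (P e)) gg hgg_meas
      (L' ^ 2) haegg_e]
    refine Finset.sum_eq_zero fun e _ => ?_
    have : ∫ z, gg (e, z) ∂(P e).prod (P e) = (∫ p, gm p ∂P e) * ∫ p, gm p ∂P e :=
      integral_prod_mul gm gm
    rw [this, hgm_zero e]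
    ring

  -- D and Dt are a.e.-measurable
  have hDae : AEMeasurable D Q := by
    by_contra h
    have h0 := Measure.map_of_not_aemeasurable h
    rw [hD] at h0
    have h1 : (Measure.pi fun _ : Fin n => Pbar) Set.univ = 1 := measure_univ
    rw [h0] at h1
    simp at h1
  have hDtae : AEMeasurable Dt Q := by
    by_contra h
    have h0 := Measure.map_of_not_aemeasurable h
    rw [hDt] at h0
    have h1 : (Measure.pi fun _ : Fin (n / 2) => Ptil) Set.univ = 1 := measure_univ
    rw [h0] at h1
    simp at h1
  have hQD : ∀ S : Set (Fin n → E × 𝒳 × ℝ), MeasurableSet S →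
      Q (D ⁻¹' S) = (Measure.pi fun _ => Pbar) S := by
    intro S hS
    rw [← hD, Measure.map_apply_of_aemeasurable hDae hS]
  have hQDt : ∀ S : Set (Fin (n / 2) → E × ((𝒳 × ℝ) × (𝒳 × ℝ))), MeasurableSet S →
      Q (Dt ⁻¹' S) = (Measure.pi fun _ => Ptil) S := by
    intro S hS
    rw [← hDt, Measure.map_apply_of_aemeasurable hDtae hS]
  -- upper and lower deviation events for each Φ
  have hcardne : (H.card : ℝ) ≠ 0 := by positivity
  have htail : ∀ Φ ∈ H, ∀ g : (E × 𝒳 × ℝ) → ℝ, Measurable g →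
      (∀ᵐ q ∂Pbar, |g q| ≤ L) → (∫ q, g q ∂Pbar = 0) →
      (Measure.pi fun _ : Fin n => Pbar) {x | (n : ℝ) * ν / 2 ≤ ∑ i, g (x i)}
        ≤ ENNReal.ofReal (δ / (4 * H.card)) := by
    intro Φ hΦ g hgmeas hgbd hgmean
    refine (aux_hoeffding Pbar n g hgmeas L ((n : ℝ) * ν / 2) hL (by positivity)
      hgmean hgbd).trans (ENNReal.ofReal_le_ofReal ?_)
    have hexp_eq : -(((n : ℝ) * ν / 2) ^ 2) / (2 * (n : ℝ) * L ^ 2)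
        = -((n : ℝ) * ν ^ 2 / (8 * L ^ 2)) := by
      field_simp
      ring
    rw [hexp_eq]
    have hxge : Real.log (4 * (H.card : ℝ) / δ) ≤ (n : ℝ) * ν ^ 2 / (8 * L ^ 2) := by
      have h8 : (0:ℝ) < 8 * L ^ 2 := by positivity
      have hν2 : (0:ℝ) < ν ^ 2 := by positivity
      rw [div_mul_eq_mul_div, div_le_iff₀ hν2] at hn1
      rw [le_div_iff₀ h8, mul_comm]
      exact hn1
    calc Real.exp (-((n : ℝ) * ν ^ 2 / (8 * L ^ 2)))
        ≤ Real.exp (-(Real.log (4 * (H.card : ℝ) / δ))) :=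
          Real.exp_le_exp.2 (neg_le_neg hxge)
      _ = δ / (4 * H.card) := by
          rw [Real.exp_neg, Real.exp_log (by positivity)]
          field_simp

  -- the deviation sets
  classical
  set Su : (𝒳 → ℝ) → Set (Fin n → E × 𝒳 × ℝ) := fun Φ =>
    {x | (n : ℝ) * ν / 2 ≤ ∑ i, (F Φ (x i) - R Φ)} with hSu_def
  set Sl : (𝒳 → ℝ) → Set (Fin n → E × 𝒳 × ℝ) := fun Φ =>
    {x | (n : ℝ) * ν / 2 ≤ ∑ i, (R Φ - F Φ (x i))} with hSl_def
  have hSu_meas : ∀ Φ ∈ H, MeasurableSet (Su Φ) := fun Φ hΦ =>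
    measurableSet_le measurable_const
      (Finset.measurable_sum _ fun i _ =>
        ((hFmeas Φ hΦ).comp (measurable_pi_apply i)).sub measurable_const)
  have hSl_meas : ∀ Φ ∈ H, MeasurableSet (Sl Φ) := fun Φ hΦ =>
    measurableSet_le measurable_const
      (Finset.measurable_sum _ fun i _ =>
        measurable_const.sub ((hFmeas Φ hΦ).comp (measurable_pi_apply i)))
  have hbd_c : ∀ Φ ∈ H, ∀ᵐ q ∂Pbar, |F Φ q - R Φ| ≤ L := by
    intro Φ hΦ
    filter_upwards [haeF Φ hΦ] with q hq
    have h1 : 0 ≤ F Φ q := sq_nonneg _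
    have h2 := hR0 Φ hΦ
    have h3 := hRL Φ hΦ
    rw [abs_le]
    constructor <;> linarith
  have hmean_c : ∀ Φ ∈ H, ∫ q, (F Φ q - R Φ) ∂Pbar = 0 := by
    intro Φ hΦ
    rw [integral_sub (hFint Φ hΦ) (integrable_const _), hFmean Φ hΦ, integral_const]
    simp
  have hSu_bd : ∀ Φ ∈ H, Q (D ⁻¹' Su Φ) ≤ ENNReal.ofReal (δ / (4 * H.card)) := by
    intro Φ hΦ
    rw [hQD _ (hSu_meas Φ hΦ)]
    exact htail Φ hΦ (fun q => F Φ q - R Φ) ((hFmeas Φ hΦ).sub measurable_const)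
      (hbd_c Φ hΦ) (hmean_c Φ hΦ)
  have hSl_bd : ∀ Φ ∈ H, Q (D ⁻¹' Sl Φ) ≤ ENNReal.ofReal (δ / (4 * H.card)) := by
    intro Φ hΦ
    rw [hQD _ (hSl_meas Φ hΦ)]
    refine htail Φ hΦ (fun q => R Φ - F Φ q) (measurable_const.sub (hFmeas Φ hΦ)) ?_ ?_
    · filter_upwards [hbd_c Φ hΦ] with q hq
      rw [abs_sub_comm]
      exact hq
    · rw [integral_sub (integrable_const _) (hFint Φ hΦ), hFmean Φ hΦ, integral_const]
      simp
  set Bad1 : Set Ω' := ⋃ Φ ∈ H, (D ⁻¹' Su Φ ∪ D ⁻¹' Sl Φ) with hBad1_def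
  have hBad1 : Q Bad1 ≤ ENNReal.ofReal (δ / 2) := by
    calc Q Bad1 ≤ ∑ Φ ∈ H, Q (D ⁻¹' Su Φ ∪ D ⁻¹' Sl Φ) := measure_biUnion_finset_le H _
      _ ≤ ∑ _Φ ∈ H, ENNReal.ofReal (δ / (2 * H.card)) := by
          refine Finset.sum_le_sum fun Φ hΦ => ?_
          calc Q (D ⁻¹' Su Φ ∪ D ⁻¹' Sl Φ) ≤ Q (D ⁻¹' Su Φ) + Q (D ⁻¹' Sl Φ) :=
              measure_union_le _ _
            _ ≤ ENNReal.ofReal (δ / (4 * H.card)) + ENNReal.ofReal (δ / (4 * H.card)) :=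
              add_le_add (hSu_bd Φ hΦ) (hSl_bd Φ hΦ)
            _ = ENNReal.ofReal (δ / (2 * H.card)) := by
              rw [← ENNReal.ofReal_add (by positivity) (by positivity)]
              congr 1
              field_simp
              ring
      _ = ENNReal.ofReal (δ / 2) := by
          rw [Finset.sum_const, nsmul_eq_mul]
          rw [← ENNReal.ofReal_natCast H.card, ← ENNReal.ofReal_mul (by positivity)]
          congr 1
          field_simp
  -- consequence of not being in Bad1
  have hdev : ∀ ω', ω' ∉ Bad1 → ∀ Φ ∈ H, |Rhat Φ ω' - R Φ| ≤ ν / 2 := by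
    intro ω' hω' Φ hΦ
    rw [hBad1_def] at hω'
    simp only [Set.mem_iUnion, not_exists] at hω'
    have hnu : ω' ∉ D ⁻¹' Su Φ ∪ D ⁻¹' Sl Φ := hω' Φ hΦ
    rw [Set.mem_union] at hnu
    push_neg at hnu
    obtain ⟨hnu1, hnu2⟩ := hnu
    have h1 : ¬ ((n : ℝ) * ν / 2 ≤ ∑ i, (F Φ (D ω' i) - R Φ)) := hnu1
    have h2 : ¬ ((n : ℝ) * ν / 2 ≤ ∑ i, (R Φ - F Φ (D ω' i))) := hnu2
    push_neg at h1 h2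
    have hsum1 : ∑ i, (F Φ (D ω' i) - R Φ) = (∑ i, F Φ (D ω' i)) - (n : ℝ) * R Φ := by
      rw [Finset.sum_sub_distrib, Finset.sum_const, Finset.card_univ, Fintype.card_fin,
        nsmul_eq_mul]
    have hsum2 : ∑ i, (R Φ - F Φ (D ω' i)) = (n : ℝ) * R Φ - ∑ i, F Φ (D ω' i) := by
      rw [Finset.sum_sub_distrib, Finset.sum_const, Finset.card_univ, Fintype.card_fin,
        nsmul_eq_mul]
    rw [hsum1] at h1
    rw [hsum2] at h2
    have hRhat_eq : Rhat Φ ω' = (∑ i, F Φ (D ω' i)) / (n : ℝ) := hRhat Φ ω'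
    rw [abs_le, hRhat_eq]
    constructor
    · rw [le_sub_iff_add_le, le_div_iff₀ hnR]
      nlinarith [h2]
    · rw [sub_le_iff_le_add, div_le_iff₀ hnR]
      nlinarith [h1]

  -- the invariance-penalty event
  have hB2 : ∃ Bad2 : Set Ω', Q Bad2 ≤ ENNReal.ofReal (δ / 2) ∧
      ∀ ω', ω' ∉ Bad2 → R'hat m ω' ≤ ε := by
    rcases Nat.eq_zero_or_pos (n / 2) with hk0 | hkpos
    · refine ⟨∅, by simp, fun ω' _ => ?_⟩
      rw [hR'hat m ω']
      have hd : ((n / 2 : ℕ) : ℝ) = 0 := by rw [hk0]; norm_num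
      rw [hd, div_zero]
      exact hε.le
    · have hkR : (0:ℝ) < ((n / 2 : ℕ):ℝ) := Nat.cast_pos.2 hkpos
      set S2 : Set (Fin (n / 2) → E × ((𝒳 × ℝ) × (𝒳 × ℝ))) :=
        {x | ((n / 2 : ℕ) : ℝ) * ε ≤ ∑ j, gg (x j)} with hS2_def
      have hS2_meas : MeasurableSet S2 :=
        measurableSet_le measurable_const
          (Finset.measurable_sum _ fun j _ => hgg_meas.comp (measurable_pi_apply j))
      refine ⟨Dt ⁻¹' S2, ?_, ?_⟩
      · rw [hQDt _ hS2_meas]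
        refine (aux_hoeffding Ptil (n / 2) gg hgg_meas (L' ^ 2) (((n / 2 : ℕ) : ℝ) * ε) (by positivity)
          (by positivity) hggmean haegg).trans (ENNReal.ofReal_le_ofReal ?_)
        have hexp_eq : -((((n / 2 : ℕ) : ℝ) * ε) ^ 2) / (2 * ((n / 2 : ℕ) : ℝ) * (L' ^ 2) ^ 2)
            = -((((n / 2 : ℕ) : ℝ)) * ε ^ 2 / (2 * L' ^ 4)) := by
          field_simp
        rw [hexp_eq]
        -- k is at least (2 L'^4/ε²) log(2/δ)
        have hlog2 : 0 < Real.log (2 / δ) := by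
          apply Real.log_pos
          rw [lt_div_iff₀ hδ0]
          linarith
        have hc0 : (0:ℝ) < 2 * L' ^ 4 / ε ^ 2 * Real.log (2 / δ) := by positivity
        have hkn : (n : ℝ) ≤ 2 * ((n / 2 : ℕ) : ℝ) + 1 := by
          have : n ≤ 2 * (n / 2) + 1 := by omega
          exact_mod_cast this
        have hn2' : 8 * (2 * L' ^ 4 / ε ^ 2 * Real.log (2 / δ)) ≤ (n : ℝ) := by
          calc 8 * (2 * L' ^ 4 / ε ^ 2 * Real.log (2 / δ))
              = 16 * L' ^ 4 / ε ^ 2 * Real.log (2 / δ) := by ring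
            _ ≤ (n : ℝ) := hn2
        have hk_ge : 2 * L' ^ 4 / ε ^ 2 * Real.log (2 / δ) ≤ ((n / 2 : ℕ) : ℝ) := by
          rcases le_or_gt (1/6 : ℝ) (2 * L' ^ 4 / ε ^ 2 * Real.log (2 / δ)) with hc | hc
          · linarith
          · have hk1 : (1:ℝ) ≤ ((n / 2 : ℕ):ℝ) := by exact_mod_cast hkpos
            linarith
        have hxge : Real.log (2 / δ) ≤ ((n / 2 : ℕ) : ℝ) * ε ^ 2 / (2 * L' ^ 4) := by
          have h2L : (0:ℝ) < 2 * L' ^ 4 := by positivity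
          have hε2 : (0:ℝ) < ε ^ 2 := by positivity
          rw [div_mul_eq_mul_div, div_le_iff₀ hε2] at hk_ge
          rw [le_div_iff₀ h2L, mul_comm]
          exact hk_ge
        calc Real.exp (-((((n / 2 : ℕ) : ℝ)) * ε ^ 2 / (2 * L' ^ 4)))
            ≤ Real.exp (-(Real.log (2 / δ))) := Real.exp_le_exp.2 (neg_le_neg hxge)
          _ = δ / 2 := by
              rw [Real.exp_neg, Real.exp_log (by positivity)]
              rw [inv_div]
      · intro ω' hω'
        have hlt : ∑ j, gg (Dt ω' j) < ((n / 2 : ℕ) : ℝ) * ε := by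
          by_contra hge
          push_neg at hge
          exact hω' hge
        have hR'eq : R'hat m ω' = (∑ j, gg (Dt ω' j)) / ((n / 2 : ℕ) : ℝ) := hR'hat m ω'
        rw [hR'eq, div_le_iff₀ hkR]
        linarith [hlt]
  obtain ⟨Bad2, hBad2, hBad2good⟩ := hB2
  -- the good event implies the conclusion
  have hGood : (Bad1 ∪ Bad2)ᶜ ⊆ {ω' | ∀ Φhat ∈ H,
      (R'hat Φhat ω' ≤ ε ∧ ∀ Φ ∈ H, R'hat Φ ω' ≤ ε → Rhat Φhat ω' ≤ Rhat Φ ω') →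
      (R m ≤ R Φhat ∧ R Φhat ≤ R m + ν) ∧ (ν < κt → Φhat = m)} := by
    intro ω' hω'
    rw [Set.mem_compl_iff, Set.mem_union] at hω'
    push_neg at hω'
    obtain ⟨hnB1, hnB2⟩ := hω'
    intro Φhat hΦhat ⟨hfeas, hmin⟩
    have hRm_feas : R'hat m ω' ≤ ε := hBad2good ω' hnB2
    have h1 : Rhat Φhat ω' ≤ Rhat m ω' := hmin m hmH hRm_feas
    have hd1 := abs_le.1 (hdev ω' hnB1 Φhat hΦhat)
    have hd2 := abs_le.1 (hdev ω' hnB1 m hmH)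
    have h2 : R Φhat ≤ R m + ν := by
      obtain ⟨hd1a, hd1b⟩ := hd1
      obtain ⟨hd2a, hd2b⟩ := hd2
      linarith
    have h3 : R m ≤ R Φhat := hRm_le Φhat hΦhat
    refine ⟨⟨h3, h2⟩, fun hνκ => ?_⟩
    by_contra hne
    have hbdd : BddBelow (Set.range fun pr :
        {pr : (𝒳 → ℝ) × (𝒳 → ℝ) // pr.1 ∈ H ∧ pr.2 ∈ H ∧ pr.1 ≠ pr.2} =>
        |R pr.val.1 - R pr.val.2|) := by
      refine ⟨0, ?_⟩
      rintro x ⟨pr, rfl⟩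
      exact abs_nonneg _
    have hκle : κt ≤ |R Φhat - R m| := by
      rw [hκt]
      exact ciInf_le hbdd ⟨(Φhat, m), hΦhat, hmH, hne⟩
    have habs : |R Φhat - R m| ≤ ν := by
      rw [abs_of_nonneg (by linarith)]
      linarith
    linarith
  -- final measure computation
  have hBadU : Q (Bad1 ∪ Bad2) ≤ ENNReal.ofReal δ := by
    calc Q (Bad1 ∪ Bad2) ≤ Q Bad1 + Q Bad2 := measure_union_le _ _
      _ ≤ ENNReal.ofReal (δ / 2) + ENNReal.ofReal (δ / 2) := add_le_add hBad1 hBad2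
      _ = ENNReal.ofReal δ := by
          rw [← ENNReal.ofReal_add (by positivity) (by positivity)]
          congr 1
          ring
  set Ev := {ω' | ∀ Φhat ∈ H,
      (R'hat Φhat ω' ≤ ε ∧ ∀ Φ ∈ H, R'hat Φ ω' ≤ ε → Rhat Φhat ω' ≤ Rhat Φ ω') →
      (R m ≤ R Φhat ∧ R Φhat ≤ R m + ν) ∧ (ν < κt → Φhat = m)} with hEv_def
  have h1le : (1 : ENNReal) ≤ Q Ev + ENNReal.ofReal δ := by
    calc (1 : ENNReal) = Q Set.univ := measure_univ.symm
      _ = Q ((Bad1 ∪ Bad2)ᶜ ∪ (Bad1 ∪ Bad2)) := by rw [Set.compl_union_self]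
      _ ≤ Q (Bad1 ∪ Bad2)ᶜ + Q (Bad1 ∪ Bad2) := measure_union_le _ _
      _ ≤ Q Ev + ENNReal.ofReal δ := add_le_add (measure_mono hGood) hBadU
  have hofreal : ENNReal.ofReal (1 - δ) ≤ Q Ev := by
    rw [show ENNReal.ofReal (1 - δ) = ENNReal.ofReal 1 - ENNReal.ofReal δ from
      ENNReal.ofReal_sub 1 hδ0.le, ENNReal.ofReal_one]
    exact tsub_le_iff_right.2 h1le
  calc 1 - δ = (ENNReal.ofReal (1 - δ)).toReal := (ENNReal.toReal_ofReal (by linarith)).symm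
    _ ≤ (Q Ev).toReal := ENNReal.toReal_mono (measure_ne_top Q Ev) hofreal
end

section
/- (Exact invariance characterization for linear models in general position) Let n ≥ 1, let E be a finite index set, and for each e ∈ E let Σ_e be a symmetric positive-definite n×n real matrix and ρ_e ∈ ℝⁿ. Let φ* ∈ ℝⁿ be nonzero with φ*ᵀρ_e = 0 for every e ∈ E, and set b_e := Σ_e·φ* + ρ_e. Assume the linear general position condition of degree 1: for every nonzero x ∈ ℝⁿ, the span of {Σ_e·x − ρ_e : e ∈ E} is all of ℝⁿ. Then for every nonzero Φ ∈ ℝⁿ, the equalities ΦᵀΣ_eΦ = Φᵀb_e hold for all e ∈ E if and only if Φ = φ*. -/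
open Matrix

/-- (Exact invariance characterization for linear models in general position, Theorem 9 of
Arjovsky et al.) Under the linear general position condition of degree 1, a nonzero linear
predictor `Φ` satisfies the gradient-invariance equalities `ΦᵀΣ_eΦ = Φᵀb_e` in every
environment if and only if `Φ` equals the OOD-optimal predictor `φ*`. -/
theorem stmt10 {n : ℕ} (hn : 1 ≤ n) {E : Type*} [Fintype E]
    (Sg : E → Matrix (Fin n) (Fin n) ℝ)
    (hsymm : ∀ e, (Sg e).IsSymm) (hpd : ∀ e, (Sg e).PosDef)
    (ρ : E → Fin n → ℝ)
    (φs : Fin n → ℝ) (hφs : φs ≠ 0) (hortho : ∀ e, φs ⬝ᵥ ρ e = 0)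
    (b : E → Fin n → ℝ) (hb : ∀ e, b e = (Sg e).mulVec φs + ρ e)
    (hgen : ∀ x : Fin n → ℝ, x ≠ 0 →
      Submodule.span ℝ {v : Fin n → ℝ | ∃ e, v = (Sg e).mulVec x - ρ e} = ⊤) :
    ∀ Φ : Fin n → ℝ, Φ ≠ 0 →
      ((∀ e, Φ ⬝ᵥ (Sg e).mulVec Φ = Φ ⬝ᵥ b e) ↔ Φ = φs) := by
  intro Φ hΦ
  constructor
  · intro h
    by_contra hne
    have hd : Φ - φs ≠ 0 := sub_ne_zero.mpr hne
    have hspan := hgen (Φ - φs) hd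
    have key : ∀ e, Φ ⬝ᵥ ((Sg e).mulVec (Φ - φs) - ρ e) = 0 := by
      intro e
      have he := h e
      rw [hb e] at he
      rw [Matrix.mulVec_sub]
      simp only [dotProduct_sub, dotProduct_add] at *
      linarith
    have hall : ∀ v ∈ Submodule.span ℝ
        {v : Fin n → ℝ | ∃ e, v = (Sg e).mulVec (Φ - φs) - ρ e}, Φ ⬝ᵥ v = 0 := by
      intro v hv
      induction hv using Submodule.span_induction with
      | mem w hw => obtain ⟨e, rfl⟩ := hw; exact key e
      | zero => simp
      | add x y _ _ hx hy => simp [dotProduct_add, hx, hy]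
      | smul a x _ hx => simp [dotProduct_smul, hx]
    have hΦΦ : Φ ⬝ᵥ Φ = 0 := hall Φ (hspan ▸ Submodule.mem_top)
    exact hΦ (dotProduct_self_eq_zero.mp hΦΦ)
  · rintro rfl e
    simp [hb, dotProduct_add, hortho]
end

section
/- (Lipschitz continuity of the IRM penalty for bounded linear predictors) Let E be a finite set of environments, π = (π_e) a probability vector, and for each e a probability measure P_e on ℝⁿ × ℝ whose coordinates (X, Y) satisfy ‖X‖ ≤ X_sup and |Y| ≤ K almost surely. Define R'(Φ) := Σ_e π_e·(E^e[ΦᵀX·(ΦᵀX − Y)])². Then for all Φ₁, Φ₂ ∈ ℝⁿ with ‖Φ₁‖² ≤ Ω and ‖Φ₂‖² ≤ Ω, |R'(Φ₁) − R'(Φ₂)| ≤ 2√Ω·(X_sup)²·(√Ω·X_sup + K)·(2√Ω·X_sup + K)·‖Φ₁ − Φ₂‖. -/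
open MeasureTheory Matrix

lemma stmt14_dot_self_nonneg {n : ℕ} (u : Fin n → ℝ) : 0 ≤ u ⬝ᵥ u :=
  Finset.sum_nonneg fun _ _ => mul_self_nonneg _

lemma stmt14_abs_dot_le {n : ℕ} (u v : Fin n → ℝ) :
    |u ⬝ᵥ v| ≤ Real.sqrt (u ⬝ᵥ u) * Real.sqrt (v ⬝ᵥ v) := by
  rw [← Real.sqrt_mul (stmt14_dot_self_nonneg u), ← Real.sqrt_sq_eq_abs]
  apply Real.sqrt_le_sqrt
  have := Finset.sum_mul_sq_le_sq_mul_sq Finset.univ u v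
  simpa [dotProduct, sq] using this

lemma stmt14_cont_dot {n : ℕ} (Φ : Fin n → ℝ) :
    Continuous (fun p : (Fin n → ℝ) × ℝ => Φ ⬝ᵥ p.1) := by
  simp only [dotProduct]
  exact continuous_finset_sum _ fun i _ =>
    continuous_const.mul ((continuous_apply i).comp continuous_fst)

/-- (Lipschitz continuity of the IRM penalty for bounded linear predictors.) -/
theorem stmt14 {E : Type*} [Fintype E] {n : ℕ}
    (π : E → ℝ) (hπ : ∀ e, 0 ≤ π e) (hπ1 : ∑ e, π e = 1)
    (P : E → Measure ((Fin n → ℝ) × ℝ)) [∀ e, IsProbabilityMeasure (P e)]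
    (Xsup K Ωb : ℝ) (hXsup : 0 < Xsup) (hK : 0 < K) (hΩb : 0 < Ωb)
    (hbd : ∀ e, ∀ᵐ p ∂P e, Real.sqrt (p.1 ⬝ᵥ p.1) ≤ Xsup ∧ |p.2| ≤ K)
    (R' : (Fin n → ℝ) → ℝ)
    (hR' : ∀ Φ, R' Φ = ∑ e, π e * (∫ p, (Φ ⬝ᵥ p.1) * (Φ ⬝ᵥ p.1 - p.2) ∂P e) ^ 2) :
    ∀ Φ₁ Φ₂ : Fin n → ℝ, Φ₁ ⬝ᵥ Φ₁ ≤ Ωb → Φ₂ ⬝ᵥ Φ₂ ≤ Ωb →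
      |R' Φ₁ - R' Φ₂| ≤ 2 * Real.sqrt Ωb * Xsup ^ 2 * (Real.sqrt Ωb * Xsup + K) *
        (2 * Real.sqrt Ωb * Xsup + K) * Real.sqrt ((Φ₁ - Φ₂) ⬝ᵥ (Φ₁ - Φ₂)) := by
  intro Φ₁ Φ₂ h1 h2
  set s : ℝ := Real.sqrt Ωb with hs
  have hs0 : 0 ≤ s := Real.sqrt_nonneg _
  set d : ℝ := Real.sqrt ((Φ₁ - Φ₂) ⬝ᵥ (Φ₁ - Φ₂)) with hd
  have hd0 : 0 ≤ d := Real.sqrt_nonneg _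
  set C : ℝ := s * Xsup * (s * Xsup + K) with hC
  set D : ℝ := d * Xsup * (2 * s * Xsup + K) with hD
  have hC0 : 0 ≤ C := mul_nonneg (mul_nonneg hs0 hXsup.le)
    (add_nonneg (mul_nonneg hs0 hXsup.le) hK.le)
  -- per-Φ bound on the dot product, a.e.
  have key : ∀ (Φ : Fin n → ℝ), Φ ⬝ᵥ Φ ≤ Ωb → ∀ p : (Fin n → ℝ) × ℝ,
      Real.sqrt (p.1 ⬝ᵥ p.1) ≤ Xsup → |Φ ⬝ᵥ p.1| ≤ s * Xsup := by
    intro Φ hΦ p hp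
    refine (stmt14_abs_dot_le Φ p.1).trans ?_
    exact mul_le_mul (Real.sqrt_le_sqrt hΦ) hp (Real.sqrt_nonneg _)
      hs0
  -- integrability and bounds for each environment
  have meas : ∀ (Φ : Fin n → ℝ) (e : E),
      AEStronglyMeasurable (fun p : (Fin n → ℝ) × ℝ =>
        (Φ ⬝ᵥ p.1) * (Φ ⬝ᵥ p.1 - p.2)) (P e) := fun Φ e =>
    (((stmt14_cont_dot Φ).mul ((stmt14_cont_dot Φ).sub continuous_snd))).aestronglyMeasurable
  have aebd : ∀ (Φ : Fin n → ℝ), Φ ⬝ᵥ Φ ≤ Ωb → ∀ e : E,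
      ∀ᵐ p ∂P e, ‖(Φ ⬝ᵥ p.1) * (Φ ⬝ᵥ p.1 - p.2)‖ ≤ C := by
    intro Φ hΦ e
    filter_upwards [hbd e] with p hp
    rw [Real.norm_eq_abs, abs_mul]
    have h1' := key Φ hΦ p hp.1
    have h2' : |Φ ⬝ᵥ p.1 - p.2| ≤ s * Xsup + K :=
      (abs_sub _ _).trans (add_le_add h1' hp.2)
    exact mul_le_mul h1' h2' (abs_nonneg _) (mul_nonneg hs0 hXsup.le)
  have integ : ∀ (Φ : Fin n → ℝ), Φ ⬝ᵥ Φ ≤ Ωb → ∀ e : E,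
      Integrable (fun p : (Fin n → ℝ) × ℝ => (Φ ⬝ᵥ p.1) * (Φ ⬝ᵥ p.1 - p.2)) (P e) :=
    fun Φ hΦ e => Integrable.mono' (integrable_const C) (meas Φ e) (aebd Φ hΦ e)
  set I : (Fin n → ℝ) → E → ℝ :=
    fun Φ e => ∫ p, (Φ ⬝ᵥ p.1) * (Φ ⬝ᵥ p.1 - p.2) ∂P e with hI
  have Ibd : ∀ (Φ : Fin n → ℝ), Φ ⬝ᵥ Φ ≤ Ωb → ∀ e : E, |I Φ e| ≤ C := by
    intro Φ hΦ e
    rw [← Real.norm_eq_abs]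
    calc ‖I Φ e‖ ≤ ∫ _, C ∂P e :=
          norm_integral_le_of_norm_le (integrable_const C) (aebd Φ hΦ e)
      _ = C := by simp
  -- bound on difference of integrals
  have Idiff : ∀ e : E, |I Φ₁ e - I Φ₂ e| ≤ D := by
    intro e
    rw [hI]
    rw [← integral_sub (integ Φ₁ h1 e) (integ Φ₂ h2 e), ← Real.norm_eq_abs]
    calc ‖∫ p, ((Φ₁ ⬝ᵥ p.1) * (Φ₁ ⬝ᵥ p.1 - p.2) - (Φ₂ ⬝ᵥ p.1) * (Φ₂ ⬝ᵥ p.1 - p.2)) ∂P e‖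
        ≤ ∫ _, D ∂P e := by
          apply norm_integral_le_of_norm_le (integrable_const D)
          filter_upwards [hbd e] with p hp
          have hrw : (Φ₁ ⬝ᵥ p.1) * (Φ₁ ⬝ᵥ p.1 - p.2) - (Φ₂ ⬝ᵥ p.1) * (Φ₂ ⬝ᵥ p.1 - p.2)
              = ((Φ₁ - Φ₂) ⬝ᵥ p.1) * ((Φ₁ ⬝ᵥ p.1) + (Φ₂ ⬝ᵥ p.1) - p.2) := by
            rw [sub_dotProduct]; ring
          rw [hrw, Real.norm_eq_abs, abs_mul]
          have hΔ : |(Φ₁ - Φ₂) ⬝ᵥ p.1| ≤ d * Xsup :=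
            (stmt14_abs_dot_le _ _).trans
              (mul_le_mul_of_nonneg_left hp.1 hd0)
          have hsum : |(Φ₁ ⬝ᵥ p.1) + (Φ₂ ⬝ᵥ p.1) - p.2| ≤ 2 * s * Xsup + K := by
            have := abs_sub ((Φ₁ ⬝ᵥ p.1) + (Φ₂ ⬝ᵥ p.1)) p.2
            refine this.trans ?_
            have h3 := (abs_add_le (Φ₁ ⬝ᵥ p.1) (Φ₂ ⬝ᵥ p.1)).trans
              (add_le_add (key Φ₁ h1 p hp.1) (key Φ₂ h2 p hp.1))
            have : s * Xsup + s * Xsup = 2 * s * Xsup := by ring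
            linarith [hp.2]
          exact mul_le_mul hΔ hsum (abs_nonneg _) (mul_nonneg hd0 hXsup.le)
      _ = D := by simp
  -- combine
  have sqdiff : ∀ e : E, |(I Φ₁ e) ^ 2 - (I Φ₂ e) ^ 2| ≤ 2 * C * D := by
    intro e
    have : (I Φ₁ e) ^ 2 - (I Φ₂ e) ^ 2 = (I Φ₁ e + I Φ₂ e) * (I Φ₁ e - I Φ₂ e) := by ring
    rw [this, abs_mul]
    have hA : |I Φ₁ e + I Φ₂ e| ≤ 2 * C := by
      have := (abs_add_le (I Φ₁ e) (I Φ₂ e)).trans (add_le_add (Ibd Φ₁ h1 e) (Ibd Φ₂ h2 e))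
      linarith
    exact mul_le_mul hA (Idiff e) (abs_nonneg _) (by linarith)
  have final : |R' Φ₁ - R' Φ₂| ≤ 2 * C * D := by
    rw [hR', hR', ← Finset.sum_sub_distrib]
    calc |∑ e, (π e * (I Φ₁ e) ^ 2 - π e * (I Φ₂ e) ^ 2)|
        ≤ ∑ e, |π e * (I Φ₁ e) ^ 2 - π e * (I Φ₂ e) ^ 2| := Finset.abs_sum_le_sum_abs _ _
      _ ≤ ∑ e, π e * (2 * C * D) := by
          apply Finset.sum_le_sum
          intro e _
          rw [← mul_sub, abs_mul, abs_of_nonneg (hπ e)]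
          exact mul_le_mul_of_nonneg_left (sqdiff e) (hπ e)
      _ = 2 * C * D := by rw [← Finset.sum_mul, hπ1, one_mul]
  refine final.trans (le_of_eq ?_)
  rw [hC, hD]; ring
end

section
/- (OOD minimax optimality of the invariant predictor for binary classification with cross-entropy loss) Let E_all be a set of environments; for each e ∈ E_all let X^e be a random variable in a measurable space 𝒳 and Y^e a random variable in {0,1}. Let Φ* : 𝒳 → 𝒵 be measurable, set Z^e := Φ*(X^e), and let m : 𝒵 → (0,1) be measurable such that for every e ∈ E_all, m(Z^e) is a version of the conditional expectation E^e[Y^e | σ(Z^e)]. Define the cross-entropy risk of a measurable predictor f : 𝒳 → (0,1) in environment e as R^e(f) := E^e[−Y^e·log f(X^e) − (1 − Y^e)·log(1 − f(X^e))], the expected conditional entropy H̄^e := E^e[H_b(m(Z^e))] with H_b(p) := −p·log p − (1 − p)·log(1 − p), and suppose: (i) there exists q ∈ E_all such that Y^q is conditionally independent of X^q given σ(Z^q); (ii) H̄^e ≤ H̄_sup for all e ∈ E_all and H̄^q = H̄_sup. Then sup over e ∈ E_all of R^e(m∘Φ*) = H̄_sup, and for every measurable f : 𝒳 → (0,1),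 sup over e ∈ E_all of R^e(f) ≥ H̄_sup; hence m∘Φ* attains min over f of max over e ∈ E_all of R^e(f), with minimax value H̄_sup. -/
open MeasureTheory ProbabilityTheory

lemma gibbs {p u : ℝ} (hp : p ∈ Set.Ioo (0:ℝ) 1) (hu : u ∈ Set.Ioo (0:ℝ) 1) :
    -(p * Real.log p) - (1 - p) * Real.log (1 - p)
      ≤ -(p * Real.log u) - (1 - p) * Real.log (1 - u) := by
  obtain ⟨hp0, hp1⟩ := hp
  obtain ⟨hu0, hu1⟩ := hu
  have h1 : Real.log (u / p) ≤ u / p - 1 := Real.log_le_sub_one_of_pos (by positivity)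
  have h2 : Real.log ((1 - u) / (1 - p)) ≤ (1 - u) / (1 - p) - 1 :=
    Real.log_le_sub_one_of_pos (by apply div_pos <;> linarith)
  rw [Real.log_div (by linarith) (by linarith)] at h1
  rw [Real.log_div (by linarith) (by linarith)] at h2
  have e1 : p * (u / p) = u := by field_simp
  have e2 : (1 - p) * ((1 - u) / (1 - p)) = 1 - u := by
    field_simp
  have h1' := mul_le_mul_of_nonneg_left h1 hp0.le
  have h2' := mul_le_mul_of_nonneg_left h2 (by linarith : (0:ℝ) ≤ 1 - p)
  nlinarith [h1', h2']

lemma negmul_nonneg {p : ℝ} (hp : p ∈ Set.Ioo (0:ℝ) 1) : 0 ≤ -(p * Real.log p) := by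
  have := Real.log_nonpos hp.1.le hp.2.le
  nlinarith [hp.1]

lemma negmul_le_one {p : ℝ} (hp : p ∈ Set.Ioo (0:ℝ) 1) : -(p * Real.log p) ≤ 1 := by
  obtain ⟨hp0, hp1⟩ := hp
  have h1 : Real.log (1 / p) ≤ 1 / p - 1 := Real.log_le_sub_one_of_pos (by positivity)
  rw [Real.log_div one_ne_zero (by linarith), Real.log_one] at h1
  have h1' := mul_le_mul_of_nonneg_left h1 hp0.le
  have e1 : p * (1 / p) = 1 := by field_simp
  nlinarith

lemma keyA {Ω : Type*} [mΩ : MeasurableSpace Ω] (μ : Measure Ω) [IsProbabilityMeasure μ]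
    {𝔪 : MeasurableSpace Ω} (h𝔪 : 𝔪 ≤ mΩ)
    {Y : Ω → ℝ} (hY : Measurable[mΩ] Y) (hY01 : ∀ᵐ ω ∂μ, Y ω = 0 ∨ Y ω = 1)
    {p : Ω → ℝ} (hp : Measurable[𝔪] p) (hp01 : ∀ ω, 0 ≤ p ω ∧ p ω ≤ 1)
    (hpc : μ[Y|𝔪] =ᵐ[μ] p)
    {a : Ω → ℝ} (ha : Measurable[𝔪] a) (ha0 : ∀ ω, 0 ≤ a ω) :
    ∫⁻ ω, ENNReal.ofReal (Y ω) * ENNReal.ofReal (a ω) ∂μ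
      = ∫⁻ ω, ENNReal.ofReal (p ω) * ENNReal.ofReal (a ω) ∂μ := by
  haveI : SigmaFinite (μ.trim h𝔪) := by infer_instance
  have haM : Measurable[mΩ] a := ha.mono h𝔪 le_rfl
  have hpM : Measurable[mΩ] p := hp.mono h𝔪 le_rfl
  have hYb : ∀ᵐ ω ∂μ, ‖Y ω‖ ≤ 1 := by
    filter_upwards [hY01] with ω h
    rcases h with h | h <;> simp [h]
  have hYint : Integrable Y μ :=
    Integrable.mono' (integrable_const 1) hY.aestronglyMeasurable hYb
  -- truncations
  set A : ℕ → Ω → ℝ := fun n ω => min (a ω) n with hA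
  have hAm : ∀ n, Measurable[𝔪] (A n) := fun n => ha.min measurable_const
  have hAM : ∀ n, Measurable[mΩ] (A n) := fun n => (hAm n).mono h𝔪 le_rfl
  have hA0 : ∀ n ω, 0 ≤ A n ω := fun n ω => le_min (ha0 ω) (n.cast_nonneg)
  have hAb : ∀ n ω, A n ω ≤ n := fun n ω => min_le_right _ _
  -- real-integral equality for truncations
  have hreal : ∀ n : ℕ, ∫ ω, A n ω * Y ω ∂μ = ∫ ω, A n ω * p ω ∂μ := by
    intro n
    have hint1 : Integrable (A n * Y) μ := by
      refine Integrable.mono' (integrable_const (n : ℝ)) ((hAM n).mul hY).aestronglyMeasurable ?_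
      filter_upwards [hY01] with ω h
      rcases h with h | h
      · simp only [Pi.mul_apply, h, mul_zero, norm_zero]
        positivity
      · simp only [Pi.mul_apply, h, mul_one, Real.norm_eq_abs, abs_of_nonneg (hA0 n ω)]
        exact hAb n ω
    have hpull := condExp_mul_of_stronglyMeasurable_left (μ := μ) (m := 𝔪)
      ((hAm n).stronglyMeasurable) hint1 hYint
    calc ∫ ω, A n ω * Y ω ∂μ = ∫ ω, (μ[A n * Y|𝔪]) ω ∂μ := (integral_condExp h𝔪).symm
      _ = ∫ ω, A n ω * p ω ∂μ := by
          refine integral_congr_ae ?_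
          filter_upwards [hpull, hpc] with ω h1 h2
          rw [h1]; simp only [Pi.mul_apply]; rw [h2]
  -- pass to lintegrals of truncations
  have hlin : ∀ n : ℕ, ∫⁻ ω, ENNReal.ofReal (Y ω) * ENNReal.ofReal (A n ω) ∂μ
      = ∫⁻ ω, ENNReal.ofReal (p ω) * ENNReal.ofReal (A n ω) ∂μ := by
    intro n
    have hint1 : Integrable (fun ω => A n ω * Y ω) μ := by
      refine Integrable.mono' (integrable_const (n : ℝ)) ((hAM n).mul hY).aestronglyMeasurable ?_
      filter_upwards [hY01] with ω h
      rcases h with h | h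
      · simp only [h, mul_zero, norm_zero]
        positivity
      · simp only [h, mul_one, Real.norm_eq_abs, abs_of_nonneg (hA0 n ω)]
        exact hAb n ω
    have hint2 : Integrable (fun ω => A n ω * p ω) μ := by
      refine Integrable.mono' (integrable_const (n : ℝ)) ((hAM n).mul hpM).aestronglyMeasurable ?_
      refine Filter.Eventually.of_forall fun ω => ?_
      have : |A n ω * p ω| = A n ω * |p ω| := by rw [abs_mul, abs_of_nonneg (hA0 n ω)]
      rw [Real.norm_eq_abs, this, abs_of_nonneg (hp01 ω).1]
      calc A n ω * p ω ≤ A n ω * 1 := by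
            exact mul_le_mul_of_nonneg_left (hp01 ω).2 (hA0 n ω)
        _ ≤ n := by rw [mul_one]; exact hAb n ω
    have e1 : ∫⁻ ω, ENNReal.ofReal (Y ω) * ENNReal.ofReal (A n ω) ∂μ
        = ENNReal.ofReal (∫ ω, A n ω * Y ω ∂μ) := by
      rw [ofReal_integral_eq_lintegral_ofReal hint1 ?_]
      · refine lintegral_congr_ae ?_
        filter_upwards [hY01] with ω h
        rw [mul_comm (A n ω) (Y ω), ENNReal.ofReal_mul]
        rcases h with h | h <;> simp [h]
      · filter_upwards [hY01] with ω h
        rcases h with h | h <;> simp [h, hA0 n ω]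
    have e2 : ∫⁻ ω, ENNReal.ofReal (p ω) * ENNReal.ofReal (A n ω) ∂μ
        = ENNReal.ofReal (∫ ω, A n ω * p ω ∂μ) := by
      rw [ofReal_integral_eq_lintegral_ofReal hint2 ?_]
      · refine lintegral_congr fun ω => ?_
        rw [mul_comm (A n ω) (p ω), ENNReal.ofReal_mul (hp01 ω).1]
      · exact Filter.Eventually.of_forall fun ω => mul_nonneg (hA0 n ω) (hp01 ω).1
    rw [e1, e2, hreal n]
  -- monotone convergence
  have hsup : ∀ x : ℝ, 0 ≤ x → ⨆ n : ℕ, ENNReal.ofReal (min x n) = ENNReal.ofReal x := by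
    intro x hx
    refine le_antisymm (iSup_le fun n => ENNReal.ofReal_le_ofReal (min_le_left _ _)) ?_
    obtain ⟨n, hn⟩ := exists_nat_ge x
    calc ENNReal.ofReal x = ENNReal.ofReal (min x n) := by rw [min_eq_left hn]
      _ ≤ ⨆ n : ℕ, ENNReal.ofReal (min x (n:ℝ)) := le_iSup (fun n : ℕ => ENNReal.ofReal (min x (n:ℝ))) n
  have mct : ∀ (g : Ω → ℝ), Measurable[mΩ] g →
      ∫⁻ ω, ENNReal.ofReal (g ω) * ENNReal.ofReal (a ω) ∂μ
        = ⨆ n : ℕ, ∫⁻ ω, ENNReal.ofReal (g ω) * ENNReal.ofReal (A n ω) ∂μ := by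
    intro g hg
    rw [← lintegral_iSup]
    · refine lintegral_congr fun ω => ?_
      rw [← ENNReal.mul_iSup, hsup (a ω) (ha0 ω)]
    · exact fun n => hg.ennreal_ofReal.mul (hAM n).ennreal_ofReal
    · intro i j hij ω
      exact mul_le_mul_right (ENNReal.ofReal_le_ofReal
        (min_le_min le_rfl (Nat.cast_le.mpr hij))) _
  calc ∫⁻ ω, ENNReal.ofReal (Y ω) * ENNReal.ofReal (a ω) ∂μ
      = ⨆ n : ℕ, ∫⁻ ω, ENNReal.ofReal (Y ω) * ENNReal.ofReal (A n ω) ∂μ := mct Y hY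
    _ = ⨆ n : ℕ, ∫⁻ ω, ENNReal.ofReal (p ω) * ENNReal.ofReal (A n ω) ∂μ := by
        exact iSup_congr hlin
    _ = ∫⁻ ω, ENNReal.ofReal (p ω) * ENNReal.ofReal (a ω) ∂μ := (mct p hpM).symm

lemma keyB {Ω : Type*} [mΩ : MeasurableSpace Ω] (μ : Measure Ω) [IsProbabilityMeasure μ]
    {𝔪 : MeasurableSpace Ω} (h𝔪 : 𝔪 ≤ mΩ)
    {Y : Ω → ℝ} (hY : Measurable[mΩ] Y) (hY01 : ∀ᵐ ω ∂μ, Y ω = 0 ∨ Y ω = 1)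
    {p : Ω → ℝ} (hp : Measurable[𝔪] p) (hp01 : ∀ ω, p ω ∈ Set.Ioo (0:ℝ) 1)
    (hpc : μ[Y|𝔪] =ᵐ[μ] p)
    {c : Ω → ℝ} (hc : Measurable[𝔪] c) (hc01 : ∀ ω, c ω ∈ Set.Ioo (0:ℝ) 1) :
    ∫⁻ ω, ENNReal.ofReal (-(Y ω * Real.log (c ω)) - (1 - Y ω) * Real.log (1 - c ω)) ∂μ
      = ∫⁻ ω, ENNReal.ofReal (-(p ω * Real.log (c ω)) - (1 - p ω) * Real.log (1 - c ω)) ∂μ := by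
  haveI : SigmaFinite (μ.trim h𝔪) := by infer_instance
  set a : Ω → ℝ := fun ω => -Real.log (c ω) with ha_def
  set b : Ω → ℝ := fun ω => -Real.log (1 - c ω) with hb_def
  have ha0 : ∀ ω, 0 ≤ a ω := fun ω =>
    neg_nonneg.mpr (Real.log_nonpos (hc01 ω).1.le (hc01 ω).2.le)
  have hb0 : ∀ ω, 0 ≤ b ω := fun ω =>
    neg_nonneg.mpr (Real.log_nonpos (by linarith [(hc01 ω).2]) (by linarith [(hc01 ω).1]))
  have ham : Measurable[𝔪] a := (Real.measurable_log.comp hc).neg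
  have hbm : Measurable[𝔪] b :=
    (Real.measurable_log.comp (measurable_const.sub hc)).neg
  have haM : Measurable[mΩ] a := ham.mono h𝔪 le_rfl
  have hbM : Measurable[mΩ] b := hbm.mono h𝔪 le_rfl
  have hYb : ∀ᵐ ω ∂μ, ‖Y ω‖ ≤ 1 := by
    filter_upwards [hY01] with ω h
    rcases h with h | h <;> simp [h]
  have hYint : Integrable Y μ :=
    Integrable.mono' (integrable_const 1) hY.aestronglyMeasurable hYb
  -- conditional expectation of 1 - Y
  have hpc' : μ[(fun ω => 1 - Y ω)|𝔪] =ᵐ[μ] fun ω => 1 - p ω := by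
    have h1 : (fun ω => 1 - Y ω) = (fun _ : Ω => (1:ℝ)) - Y := rfl
    rw [h1]
    have h2 := condExp_sub (m := 𝔪) (μ := μ) (integrable_const (1:ℝ)) hYint
    refine h2.trans ?_
    have h3 : μ[(fun _ : Ω => (1:ℝ))|𝔪] = fun _ => (1:ℝ) := condExp_const h𝔪 1
    filter_upwards [hpc] with ω hω
    simp only [Pi.sub_apply, h3, hω]
  -- split LHS
  have hL : ∫⁻ ω, ENNReal.ofReal (-(Y ω * Real.log (c ω)) - (1 - Y ω) * Real.log (1 - c ω)) ∂μ
      = ∫⁻ ω, (ENNReal.ofReal (Y ω) * ENNReal.ofReal (a ω)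
          + ENNReal.ofReal (1 - Y ω) * ENNReal.ofReal (b ω)) ∂μ := by
    refine lintegral_congr_ae ?_
    filter_upwards [hY01] with ω h
    rcases h with h | h <;> simp [h, ha_def, hb_def]
  have hsplit : ∫⁻ ω, (ENNReal.ofReal (Y ω) * ENNReal.ofReal (a ω)
          + ENNReal.ofReal (1 - Y ω) * ENNReal.ofReal (b ω)) ∂μ
      = ∫⁻ ω, ENNReal.ofReal (Y ω) * ENNReal.ofReal (a ω) ∂μ
        + ∫⁻ ω, ENNReal.ofReal (1 - Y ω) * ENNReal.ofReal (b ω) ∂μ :=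
    lintegral_add_left (hY.ennreal_ofReal.mul haM.ennreal_ofReal) _
  have hsplit' : ∫⁻ ω, (ENNReal.ofReal (p ω) * ENNReal.ofReal (a ω)
          + ENNReal.ofReal (1 - p ω) * ENNReal.ofReal (b ω)) ∂μ
      = ∫⁻ ω, ENNReal.ofReal (p ω) * ENNReal.ofReal (a ω) ∂μ
        + ∫⁻ ω, ENNReal.ofReal (1 - p ω) * ENNReal.ofReal (b ω) ∂μ :=
    lintegral_add_left (((hp.mono h𝔪 le_rfl).ennreal_ofReal).mul haM.ennreal_ofReal) _
  have k1 := keyA (mΩ := mΩ) μ h𝔪 hY hY01 hp (fun ω => ⟨(hp01 ω).1.le, (hp01 ω).2.le⟩) hpc ham ha0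
  have hY1 : Measurable[mΩ] (fun ω => 1 - Y ω) := measurable_const.sub hY
  have hp1 : Measurable[𝔪] (fun ω => 1 - p ω) := measurable_const.sub hp
  have k2 := keyA (mΩ := mΩ) μ h𝔪 hY1
    (by filter_upwards [hY01] with ω h; rcases h with h | h <;> simp [h])
    hp1
    (fun ω => ⟨by linarith [(hp01 ω).2], by linarith [(hp01 ω).1]⟩)
    hpc' hbm hb0
  have hR : ∫⁻ ω, (ENNReal.ofReal (p ω) * ENNReal.ofReal (a ω)
          + ENNReal.ofReal (1 - p ω) * ENNReal.ofReal (b ω)) ∂μ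
      = ∫⁻ ω, ENNReal.ofReal (-(p ω * Real.log (c ω)) - (1 - p ω) * Real.log (1 - c ω)) ∂μ := by
    refine lintegral_congr fun ω => ?_
    rw [← ENNReal.ofReal_mul (hp01 ω).1.le,
      ← ENNReal.ofReal_mul (by linarith [(hp01 ω).2] : (0:ℝ) ≤ 1 - p ω),
      ← ENNReal.ofReal_add (mul_nonneg (hp01 ω).1.le (ha0 ω))
        (mul_nonneg (by linarith [(hp01 ω).2]) (hb0 ω))]
    congr 1
    simp only [ha_def, hb_def]
    ring
  rw [hL, hsplit, k1, k2, ← hsplit', hR]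

lemma keyD {Ω 𝒳 𝒵 : Type*} [mΩ : MeasurableSpace Ω] [StandardBorelSpace Ω]
    [m𝒳 : MeasurableSpace 𝒳] [m𝒵 : MeasurableSpace 𝒵]
    (μ : Measure Ω) [IsProbabilityMeasure μ]
    {X : Ω → 𝒳} (hX : Measurable[mΩ] X) {Y : Ω → ℝ} (hY : Measurable[mΩ] Y)
    (hY01 : ∀ᵐ ω ∂μ, Y ω = 0 ∨ Y ω = 1)
    {Φs : 𝒳 → 𝒵} (hΦs : Measurable Φs)
    {m : 𝒵 → ℝ} (hm : Measurable m) (hm01 : ∀ z, m z ∈ Set.Ioo (0:ℝ) 1)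
    (hcond : μ[Y|MeasurableSpace.comap (fun ω => Φs (X ω)) m𝒵] =ᵐ[μ] fun ω => m (Φs (X ω)))
    (hq : CondIndepFun (MeasurableSpace.comap (fun ω => Φs (X ω)) m𝒵)
      (measurable_iff_comap_le.mp (hΦs.comp hX)) Y X μ) :
    μ[Y|MeasurableSpace.comap X m𝒳] =ᵐ[μ] fun ω => m (Φs (X ω)) := by
  have hz : MeasurableSpace.comap (fun ω => Φs (X ω)) m𝒵 ≤ mΩ :=
    measurable_iff_comap_le.mp (hΦs.comp hX)
  have hx : MeasurableSpace.comap X m𝒳 ≤ mΩ := measurable_iff_comap_le.mp hX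
  haveI : SigmaFinite (μ.trim hx) := by infer_instance
  haveI : SigmaFinite (μ.trim hz) := by infer_instance
  set g : Ω → ℝ := fun ω => m (Φs (X ω)) with hg_def
  have hgz : Measurable[(MeasurableSpace.comap (fun ω => Φs (X ω)) m𝒵)] g := fun s hs => ⟨m ⁻¹' s, hm hs, rfl⟩
  have hgM : Measurable[mΩ] g := hgz.mono hz le_rfl
  have hg01 : ∀ ω, g ω ∈ Set.Ioo (0:ℝ) 1 := fun ω => hm01 _
  have hgint : Integrable g μ := by
    refine Integrable.mono' (integrable_const 1) hgM.aestronglyMeasurable ?_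
    refine Filter.Eventually.of_forall fun ω => ?_
    rw [Real.norm_eq_abs, abs_of_nonneg (hg01 ω).1.le]
    exact (hg01 ω).2.le
  have hYint : Integrable Y μ := by
    refine Integrable.mono' (integrable_const 1) hY.aestronglyMeasurable ?_
    filter_upwards [hY01] with ω h
    rcases h with h | h <;> simp [h]
  set t : Set Ω := Y ⁻¹' {1} with ht_def
  have ht : MeasurableSet[mΩ] t := hY (measurableSet_singleton 1)
  have hYind : Y =ᵐ[μ] t.indicator (fun _ => (1:ℝ)) := by
    filter_upwards [hY01] with ω h
    rcases h with h | h
    · have : ω ∉ t := by simp [ht_def, h]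
      simp [Set.indicator_of_notMem this, h]
    · have : ω ∈ t := by simp [ht_def, h]
      simp [Set.indicator_of_mem this, h]
  refine (ae_eq_condExp_of_forall_setIntegral_eq hx hYint
    (fun s _ _ => hgint.integrableOn) ?_ ?_).symm
  swap
  · exact StronglyMeasurable.aestronglyMeasurable
      ((hgz.mono (by rintro s ⟨B, hB, rfl⟩; exact ⟨Φs ⁻¹' B, hΦs hB, rfl⟩ :
        MeasurableSpace.comap (fun ω => Φs (X ω)) m𝒵 ≤ MeasurableSpace.comap X m𝒳) le_rfl).stronglyMeasurable)
  rintro s ⟨A, hA, rfl⟩ -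
  have hs' : MeasurableSet[mΩ] (X ⁻¹' A) := hX hA
  have hIq := (condIndepFun_iff_condExp_inter_preimage_eq_mul (μ := μ)
    (m' := (MeasurableSpace.comap (fun ω => Φs (X ω)) m𝒵)) (hm' := hz) hY hX).mp hq {1} A (measurableSet_singleton 1) hA
  have hts : MeasurableSet[mΩ] (t ∩ X ⁻¹' A) := ht.inter hs'
  have hind_int : Integrable ((X ⁻¹' A).indicator (fun _ => (1:ℝ))) μ :=
    (integrable_const (1:ℝ)).indicator hs'
  have hindM : Measurable[mΩ] ((X ⁻¹' A).indicator (fun _ => (1:ℝ))) :=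
    measurable_const.indicator hs'
  have hmul_int : Integrable (fun ω => g ω * (X ⁻¹' A).indicator (fun _ => (1:ℝ)) ω) μ := by
    refine Integrable.mono' (integrable_const 1)
      (hgM.mul hindM).aestronglyMeasurable ?_
    refine Filter.Eventually.of_forall fun ω => ?_
    rw [Real.norm_eq_abs, abs_mul, abs_of_nonneg (hg01 ω).1.le]
    by_cases hω : ω ∈ X ⁻¹' A
    · simp [Set.indicator_of_mem hω]
      exact (hg01 ω).2.le
    · simp [Set.indicator_of_notMem hω]
  have hpull := condExp_mul_of_stronglyMeasurable_left (μ := μ) (m := (MeasurableSpace.comap (fun ω => Φs (X ω)) m𝒵))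
    hgz.stronglyMeasurable (f := g) (g := (X ⁻¹' A).indicator (fun _ => (1:ℝ)))
    hmul_int hind_int
  -- condexp of indicator of t equals g
  have hDt : (μ⟦t|(MeasurableSpace.comap (fun ω => Φs (X ω)) m𝒵)⟧) =ᵐ[μ] g :=
    ((condExp_congr_ae (m := (MeasurableSpace.comap (fun ω => Φs (X ω)) m𝒵)) hYind).symm.trans hcond)
  calc ∫ x in X ⁻¹' A, g x ∂μ
      = ∫ x, g x * (X ⁻¹' A).indicator (fun _ => (1:ℝ)) x ∂μ := by
        rw [← integral_indicator (μ := μ) hs']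
        refine integral_congr_ae (Filter.Eventually.of_forall fun ω => ?_)
        by_cases hω : ω ∈ X ⁻¹' A <;>
          simp [Set.indicator_of_mem, Set.indicator_of_notMem, hω]
    _ = ∫ x, (μ[(fun ω => g ω * (X ⁻¹' A).indicator (fun _ => (1:ℝ)) ω)|(MeasurableSpace.comap (fun ω => Φs (X ω)) m𝒵)]) x ∂μ :=
        (integral_condExp hz).symm
    _ = ∫ x, g x * (μ⟦X ⁻¹' A|(MeasurableSpace.comap (fun ω => Φs (X ω)) m𝒵)⟧) x ∂μ := by
        refine integral_congr_ae ?_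
        filter_upwards [hpull] with ω hω
        exact hω
    _ = ∫ x, (μ⟦t|(MeasurableSpace.comap (fun ω => Φs (X ω)) m𝒵)⟧) x * (μ⟦X ⁻¹' A|(MeasurableSpace.comap (fun ω => Φs (X ω)) m𝒵)⟧) x ∂μ := by
        refine integral_congr_ae ?_
        filter_upwards [hDt] with ω hω
        rw [hω]
    _ = ∫ x, (μ⟦t ∩ X ⁻¹' A|(MeasurableSpace.comap (fun ω => Φs (X ω)) m𝒵)⟧) x ∂μ := (integral_congr_ae hIq).symm
    _ = ∫ x, (t ∩ X ⁻¹' A).indicator (fun _ => (1:ℝ)) x ∂μ := integral_condExp hz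
    _ = ∫ x in X ⁻¹' A, t.indicator (fun _ => (1:ℝ)) x ∂μ := by
        rw [← integral_indicator (μ := μ) hs']
        refine integral_congr_ae (Filter.Eventually.of_forall fun ω => ?_)
        rw [Set.indicator_indicator, Set.inter_comm]
    _ = ∫ x in X ⁻¹' A, Y x ∂μ := by
        refine setIntegral_congr_ae (μ := μ) hs' ?_
        filter_upwards [hYind] with ω hω _
        rw [hω]


lemma ent_nonneg {p : ℝ} (hp : p ∈ Set.Ioo (0:ℝ) 1) :
    0 ≤ -(p * Real.log p) - (1 - p) * Real.log (1 - p) := by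
  have h1 := negmul_nonneg hp
  have h2 := negmul_nonneg (⟨by linarith [hp.2], by linarith [hp.1]⟩ : (1-p) ∈ Set.Ioo (0:ℝ) 1)
  linarith

lemma ent_le_two {p : ℝ} (hp : p ∈ Set.Ioo (0:ℝ) 1) :
    -(p * Real.log p) - (1 - p) * Real.log (1 - p) ≤ 2 := by
  have h1 := negmul_le_one hp
  have h2 := negmul_le_one (⟨by linarith [hp.2], by linarith [hp.1]⟩ : (1-p) ∈ Set.Ioo (0:ℝ) 1)
  linarith

/-- (OOD minimax optimality of the invariant predictor for binary classification with
cross-entropy loss.) If `m(Z^e)` is a version of `E^e[Y^e | σ(Z^e)]` for the binary label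
`Y^e` in every environment, there is an environment `q` in which `Y^q ⟂ X^q | σ(Z^q)`, and
the expected conditional entropies satisfy `H̄^e ≤ H̄_sup` with `H̄^q = H̄_sup`, then the
worst-case cross-entropy risk of `m ∘ Φ*` is `H̄_sup` and every measurable predictor with
values in `(0,1)` has worst-case risk at least `H̄_sup`. -/
theorem stmt18
    {ι 𝒳 𝒵 : Type*} [MeasurableSpace 𝒳] [MeasurableSpace 𝒵]
    {Ω : ι → Type*} [∀ e, MeasurableSpace (Ω e)]
    [∀ e, StandardBorelSpace (Ω e)] [∀ e, Nonempty (Ω e)]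
    (μ : ∀ e, Measure (Ω e)) [∀ e, IsProbabilityMeasure (μ e)]
    (X : ∀ e, Ω e → 𝒳) (Y : ∀ e, Ω e → ℝ)
    (hX : ∀ e, Measurable (X e)) (hY : ∀ e, Measurable (Y e))
    (hY01 : ∀ e, ∀ᵐ ω ∂μ e, Y e ω = 0 ∨ Y e ω = 1)
    (Φs : 𝒳 → 𝒵) (hΦs : Measurable Φs)
    (m : 𝒵 → ℝ) (hm : Measurable m) (hm01 : ∀ z, m z ∈ Set.Ioo (0 : ℝ) 1)
    (hcond : ∀ e, (μ e)[Y e|MeasurableSpace.comap (fun ω => Φs (X e ω)) inferInstance]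
      =ᵐ[μ e] fun ω => m (Φs (X e ω)))
    (Hbar : ι → ℝ)
    (hHbar : ∀ e, Hbar e = ∫ ω,
      (-(m (Φs (X e ω)) * Real.log (m (Φs (X e ω))))
        - (1 - m (Φs (X e ω))) * Real.log (1 - m (Φs (X e ω)))) ∂μ e)
    (q : ι)
    (hq : CondIndepFun (MeasurableSpace.comap (fun ω => Φs (X q ω)) inferInstance)
      (measurable_iff_comap_le.mp (hΦs.comp (hX q))) (Y q) (X q) (μ q))
    (Hsup : ℝ) (hHsup : ∀ e, Hbar e ≤ Hsup) (hHq : Hbar q = Hsup) :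
    (⨆ e, ∫⁻ ω, ENNReal.ofReal
        (-(Y e ω * Real.log (m (Φs (X e ω))))
          - (1 - Y e ω) * Real.log (1 - m (Φs (X e ω)))) ∂μ e)
      = ENNReal.ofReal Hsup ∧
    ∀ f : 𝒳 → ℝ, Measurable f → (∀ x, f x ∈ Set.Ioo (0 : ℝ) 1) →
      ENNReal.ofReal Hsup ≤ ⨆ e, ∫⁻ ω, ENNReal.ofReal
        (-(Y e ω * Real.log (f (X e ω)))
          - (1 - Y e ω) * Real.log (1 - f (X e ω))) ∂μ e := by
  haveI : Nonempty ι := ⟨q⟩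
  -- entropy lintegral equals ofReal (Hbar e)
  have hent : ∀ e, ∫⁻ ω, ENNReal.ofReal
      (-(m (Φs (X e ω)) * Real.log (m (Φs (X e ω))))
        - (1 - m (Φs (X e ω))) * Real.log (1 - m (Φs (X e ω)))) ∂μ e
      = ENNReal.ofReal (Hbar e) := by
    intro e
    have gm : Measurable (fun ω => m (Φs (X e ω))) := hm.comp (hΦs.comp (hX e))
    have hintg : Integrable (fun ω =>
        -(m (Φs (X e ω)) * Real.log (m (Φs (X e ω))))
          - (1 - m (Φs (X e ω))) * Real.log (1 - m (Φs (X e ω)))) (μ e) := by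
      refine Integrable.mono' (integrable_const 2)
        (((gm.mul (Real.measurable_log.comp gm)).neg.sub
          ((measurable_const.sub gm).mul
            (Real.measurable_log.comp (measurable_const.sub gm)))).aestronglyMeasurable) ?_
      refine Filter.Eventually.of_forall fun ω => ?_
      rw [Real.norm_eq_abs, abs_of_nonneg (ent_nonneg (hm01 _))]
      exact ent_le_two (hm01 _)
    rw [hHbar e, ofReal_integral_eq_lintegral_ofReal hintg
      (Filter.Eventually.of_forall fun ω => ent_nonneg (hm01 _))]
  -- risk of m ∘ Φ* equals ofReal (Hbar e)
  have hriskm : ∀ e, ∫⁻ ω, ENNReal.ofReal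
      (-(Y e ω * Real.log (m (Φs (X e ω))))
        - (1 - Y e ω) * Real.log (1 - m (Φs (X e ω)))) ∂μ e
      = ENNReal.ofReal (Hbar e) := by
    intro e
    have h𝔪 : MeasurableSpace.comap (fun ω => Φs (X e ω)) inferInstance
        ≤ (inferInstance : MeasurableSpace (Ω e)) :=
      measurable_iff_comap_le.mp (hΦs.comp (hX e))
    have hpz : Measurable[MeasurableSpace.comap (fun ω => Φs (X e ω)) inferInstance]
        (fun ω => m (Φs (X e ω))) := fun s hs => ⟨m ⁻¹' s, hm hs, rfl⟩
    have h1 := keyB (μ e) h𝔪 (hY e) (hY01 e) hpz (fun ω => hm01 _) (hcond e)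
      hpz (fun ω => hm01 _)
    rw [h1, hent e]
  constructor
  · refine le_antisymm (iSup_le fun e => ?_) ?_
    · rw [hriskm e]
      exact ENNReal.ofReal_le_ofReal (hHsup e)
    · rw [← hHq, ← hriskm q]
      exact le_iSup (fun e => ∫⁻ ω, ENNReal.ofReal
        (-(Y e ω * Real.log (m (Φs (X e ω))))
          - (1 - Y e ω) * Real.log (1 - m (Φs (X e ω)))) ∂μ e) q
  · intro f hf hf01
    have hx : MeasurableSpace.comap (X q) inferInstance
        ≤ (inferInstance : MeasurableSpace (Ω q)) := measurable_iff_comap_le.mp (hX q)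
    have hpzx : Measurable[MeasurableSpace.comap (X q) inferInstance]
        (fun ω => m (Φs (X q ω))) := fun s hs => ⟨Φs ⁻¹' (m ⁻¹' s), hΦs (hm hs), rfl⟩
    have hcx : Measurable[MeasurableSpace.comap (X q) inferInstance]
        (fun ω => f (X q ω)) := fun s hs => ⟨f ⁻¹' s, hf hs, rfl⟩
    have hD := keyD (μ q) (hX q) (hY q) (hY01 q) hΦs hm hm01 (hcond q) hq
    have h2 := keyB (μ q) hx (hY q) (hY01 q) hpzx (fun ω => hm01 _) hD
      hcx (fun ω => hf01 _)
    calc ENNReal.ofReal Hsup = ENNReal.ofReal (Hbar q) := by rw [hHq]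
      _ = ∫⁻ ω, ENNReal.ofReal
          (-(m (Φs (X q ω)) * Real.log (m (Φs (X q ω))))
            - (1 - m (Φs (X q ω))) * Real.log (1 - m (Φs (X q ω)))) ∂μ q := (hent q).symm
      _ ≤ ∫⁻ ω, ENNReal.ofReal
          (-(m (Φs (X q ω)) * Real.log (f (X q ω)))
            - (1 - m (Φs (X q ω))) * Real.log (1 - f (X q ω))) ∂μ q :=
        lintegral_mono fun ω => ENNReal.ofReal_le_ofReal (gibbs (hm01 _) (hf01 _))
      _ = ∫⁻ ω, ENNReal.ofReal
          (-(Y q ω * Real.log (f (X q ω)))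
            - (1 - Y q ω) * Real.log (1 - f (X q ω))) ∂μ q := h2.symm
      _ ≤ ⨆ e, ∫⁻ ω, ENNReal.ofReal
          (-(Y e ω * Real.log (f (X e ω)))
            - (1 - Y e ω) * Real.log (1 - f (X e ω))) ∂μ e :=
        le_iSup (fun e => ∫⁻ ω, ENNReal.ofReal
          (-(Y e ω * Real.log (f (X e ω)))
            - (1 - Y e ω) * Real.log (1 - f (X e ω))) ∂μ e) q
end
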